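/- arXiv:1612.08489 — 10 statements merged into one kernel-verified Lean document; each statement's English description precedes it below -/
import Mathlib

section
/- Let n ≥ 3. The orthogonal group O(n, F₂) (the group of n×n matrices A over F₂ with A·Aᵀ = I) acting on F₂ⁿ by left multiplication has exactly four orbits, represented by the vectors 0, e₁, e₁+e₂, and the all-ones vector Ω = e₁+⋯+eₙ. -/
open Matrix
variable {n : ℕ}

def ORel (u v : Fin n → ZMod 2) : Prop :=
  ∃ A : Matrix (Fin n) (Fin n) (ZMod 2), A * Aᵀ = 1 ∧ A.mulVec u = v

lemma ORel.refl (u : Fin n → ZMod 2) : ORel u u := ⟨1, by simp, by simp⟩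

lemma ORel.trans {u v w : Fin n → ZMod 2} (h1 : ORel u v) (h2 : ORel v w) : ORel u w := by
  obtain ⟨A, hA, rfl⟩ := h1
  obtain ⟨B, hB, rfl⟩ := h2
  exact ⟨B * A, by rw [transpose_mul, ← mul_assoc, mul_assoc B, hA, mul_one, hB],
    by rw [← mulVec_mulVec]⟩

lemma ORel.symm {u v : Fin n → ZMod 2} (h : ORel u v) : ORel v u := by
  obtain ⟨A, hA, rfl⟩ := h
  have h2 : Aᵀ * A = 1 := mul_eq_one_comm.mp hA
  exact ⟨Aᵀ, by rw [transpose_transpose, h2], by rw [mulVec_mulVec, h2, one_mulVec]⟩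

lemma ORel.dot {u v : Fin n → ZMod 2} (h : ORel u v) : u ⬝ᵥ u = v ⬝ᵥ v := by
  obtain ⟨A, hA, rfl⟩ := h
  have h2 : Aᵀ * A = 1 := mul_eq_one_comm.mp hA
  rw [dotProduct_mulVec, ← mulVec_transpose, mulVec_mulVec, h2, one_mulVec]

lemma ORel.zero {v : Fin n → ZMod 2} (h : ORel 0 v) : v = 0 := by
  obtain ⟨A, hA, rfl⟩ := h; simp

lemma ORel.omega {v : Fin n → ZMod 2} (h : ORel (fun _ => 1) v) : v = fun _ => 1 := by
  obtain ⟨A, hA, rfl⟩ := h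
  funext i
  have hd : (A * Aᵀ) i i = 1 := by rw [hA]; simp
  rw [Matrix.mul_apply] at hd
  simp only [transpose_apply] at hd
  calc A.mulVec (fun _ => 1) i = ∑ j, A i j * 1 := by rw [Matrix.mulVec]; rfl
    _ = ∑ j, A i j * A i j := by
        refine Finset.sum_congr rfl fun j _ => ?_
        rw [mul_one]; revert hd; have : ∀ x : ZMod 2, x = x * x := by decide
        intro _; exact this _
    _ = 1 := hd

lemma ORel.perm (σ : Equiv.Perm (Fin n)) (u : Fin n → ZMod 2) : ORel u (u ∘ σ) := by
  refine ⟨Matrix.of fun i j => if σ i = j then 1 else 0, ?_, ?_⟩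
  · ext i k
    simp only [Matrix.mul_apply, transpose_apply, Matrix.of_apply, Matrix.one_apply,
      ite_mul, one_mul, zero_mul]
    rw [Finset.sum_ite_eq (Finset.univ) (σ i) (fun j => if σ k = j then (1 : ZMod 2) else 0)]
    simp [σ.injective.eq_iff, eq_comm]
  · funext i
    simp only [Matrix.mulVec, dotProduct, Matrix.of_apply, ite_mul, one_mul, zero_mul]
    simp [Finset.sum_ite_eq]

lemma ORel.transvection (w u : Fin n → ZMod 2) (hw : w ⬝ᵥ w = 0) :
    ORel u (u + (w ⬝ᵥ u) • w) := by
  refine ⟨1 + vecMulVec w w, ?_, ?_⟩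
  · have hT : (1 + vecMulVec w w)ᵀ = 1 + vecMulVec w w := by
      rw [transpose_add, transpose_one]
      congr 1
      ext i j
      simp [vecMulVec_apply, mul_comm]
    rw [hT, add_mul, mul_add, mul_add, one_mul, one_mul, mul_one]
    have h2 : vecMulVec w w * vecMulVec w w = 0 := by
      ext i j
      simp only [Matrix.mul_apply, vecMulVec_apply, Matrix.zero_apply]
      calc ∑ k, (w i * w k) * (w k * w j) = (w i * w j) * ∑ k, w k * w k := by
            rw [Finset.mul_sum]; exact Finset.sum_congr rfl fun k _ => by ring
        _ = 0 := by rw [← dotProduct]  at *; rw [hw, mul_zero]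
    rw [h2, add_zero, add_assoc]
    have : vecMulVec w w + vecMulVec w w = 0 := by
      ext i j; simp only [Matrix.add_apply, Matrix.zero_apply]
      have : ∀ x : ZMod 2, x + x = 0 := by decide
      exact this _
    rw [this, add_zero]
  · rw [add_mulVec, one_mulVec]
    congr 1
    funext i
    simp only [Matrix.mulVec, dotProduct, vecMulVec_apply, Pi.smul_apply, smul_eq_mul]
    calc ∑ j, w i * w j * u j = (∑ j, w j * u j) * w i := by
          rw [Finset.sum_mul]; exact Finset.sum_congr rfl fun j _ => by ring
      _ = _ := rfl

def supp (v : Fin n → ZMod 2) : Finset (Fin n) := Finset.univ.filter (fun j => v j = 1)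

lemma mem_supp {v : Fin n → ZMod 2} {j : Fin n} : j ∈ supp v ↔ v j = 1 := by
  simp [supp]

lemma zmod2_cases (x : ZMod 2) : x = 0 ∨ x = 1 := by revert x; decide
lemma notMem_supp {v : Fin n → ZMod 2} {j : Fin n} : j ∉ supp v ↔ v j = 0 := by
  rw [mem_supp]
  rcases zmod2_cases (v j) with h | h <;> simp [h]

lemma dot_card (v : Fin n → ZMod 2) : v ⬝ᵥ v = ((supp v).card : ZMod 2) := by
  rw [dotProduct]
  rw [Finset.card_eq_sum_ones, Nat.cast_sum]
  rw [← Finset.sum_filter_add_sum_filter_not Finset.univ (fun j => v j = 1) (fun j => v j * v j)]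
  have h1 : ∀ j ∈ Finset.univ.filter (fun j => v j = 1), v j * v j = 1 := by
    intro j hj; rw [Finset.mem_filter] at hj; rw [hj.2]; ring
  have h2 : ∀ j ∈ Finset.univ.filter (fun j => ¬ v j = 1), v j * v j = 0 := by
    intro j hj; rw [Finset.mem_filter] at hj
    rcases zmod2_cases (v j) with h | h
    · rw [h]; ring
    · exact absurd h hj.2
  rw [Finset.sum_congr rfl h1, Finset.sum_congr rfl h2, supp]
  simp

lemma supp_zero_iff (v : Fin n → ZMod 2) : supp v = ∅ ↔ v = 0 := by
  constructor
  · intro h; funext j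
    have := notMem_supp.mp (by simp [h] : j ∉ supp v)
    simpa using this
  · intro h; subst h; ext j; simp [mem_supp]

lemma supp_univ_iff (v : Fin n → ZMod 2) : supp v = Finset.univ ↔ v = fun _ => 1 := by
  constructor
  · intro h; funext j
    exact mem_supp.mp (h ▸ Finset.mem_univ j)
  · intro h; subst h; ext j; simp [mem_supp]

def E1 (n : ℕ) : Fin n → ZMod 2 := fun j => if (j:ℕ) = 0 then 1 else 0
def E2 (n : ℕ) : Fin n → ZMod 2 := fun j => if (j:ℕ) = 0 ∨ (j:ℕ) = 1 then 1 else 0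

lemma indicator_eq (v : Fin n → ZMod 2) (j : Fin n) :
    v j = if j ∈ supp v then 1 else 0 := by
  by_cases h : j ∈ supp v
  · rw [if_pos h, mem_supp.mp h]
  · rw [if_neg h, notMem_supp.mp h]

lemma key (hn : 3 ≤ n) (k : ℕ) :
    ∀ (v : Fin n → ZMod 2), (supp v).card = k → v ≠ 0 → v ≠ (fun _ => 1) →
    (v ⬝ᵥ v = 1 ∧ ORel v (E1 n)) ∨ (v ⬝ᵥ v = 0 ∧ ORel v (E2 n)) := by
  induction k using Nat.strong_induction_on with
  | _ k IH =>
  intro v hcard hv0 hvO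
  have hz0n : 0 < n := by omega
  have hz1n : 1 < n := by omega
  set z0 : Fin n := ⟨0, hz0n⟩ with hz0
  set z1 : Fin n := ⟨1, hz1n⟩ with hz1
  have hz01 : z0 ≠ z1 := by simp [hz0, hz1, Fin.ext_iff]
  match k, hcard with
  | 0, hcard =>
    exact absurd ((supp_zero_iff v).mp (Finset.card_eq_zero.mp hcard)) hv0
  | 1, hcard =>
    obtain ⟨a, ha⟩ := Finset.card_eq_one.mp hcard
    left
    refine ⟨by rw [dot_card, hcard]; decide, ?_⟩
    have hv : v = E1 n ∘ (Equiv.swap z0 a) := by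
      funext j
      rw [indicator_eq v j, ha]
      simp only [Function.comp_apply, E1, Finset.mem_singleton]
      have h0 : ((Equiv.swap z0 a j : Fin n) : ℕ) = 0 ↔ j = a := by
        constructor
        · intro h
          have : Equiv.swap z0 a j = z0 := Fin.ext h
          rwa [Equiv.swap_apply_eq_iff, Equiv.swap_apply_left] at this
        · intro h; rw [h, Equiv.swap_apply_right]
      exact if_congr h0.symm rfl rfl
    rw [hv]
    exact (ORel.perm (Equiv.swap z0 a) (E1 n)).symm
  | 2, hcard =>
    obtain ⟨a, b, hab, hs⟩ := Finset.card_eq_two.mp hcard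
    right
    refine ⟨by rw [dot_card, hcard]; decide, ?_⟩
    have hτz1a : (Equiv.swap z0 a) z1 ≠ a := by
      rw [Ne, Equiv.swap_apply_eq_iff, Equiv.swap_apply_right]
      exact hz01.symm
    set π := (Equiv.swap z0 a).trans (Equiv.swap ((Equiv.swap z0 a) z1) b) with hπ
    have hπ0 : π z0 = a := by
      rw [hπ, Equiv.trans_apply, Equiv.swap_apply_left]
      exact Equiv.swap_apply_of_ne_of_ne hτz1a.symm hab
    have hπ1 : π z1 = b := by
      rw [hπ, Equiv.trans_apply]
      exact Equiv.swap_apply_left _ _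
    have hv : v = E2 n ∘ π.symm := by
      funext j
      rw [indicator_eq v j, hs]
      simp only [Function.comp_apply, E2, Finset.mem_insert, Finset.mem_singleton]
      have h0 : ((π.symm j : Fin n) : ℕ) = 0 ↔ j = a := by
        constructor
        · intro h
          have : π.symm j = z0 := Fin.ext h
          rw [Equiv.symm_apply_eq, hπ0] at this; exact this
        · intro h; rw [h, ← hπ0, Equiv.symm_apply_apply]
      have h1 : ((π.symm j : Fin n) : ℕ) = 1 ↔ j = b := by
        constructor
        · intro h
          have : π.symm j = z1 := Fin.ext h
          rw [Equiv.symm_apply_eq, hπ1] at this; exact this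
        · intro h; rw [h, ← hπ1, Equiv.symm_apply_apply]
      exact if_congr (or_congr h0.symm h1.symm) rfl rfl
    rw [hv]
    exact (ORel.perm π.symm (E2 n)).symm
  | (m+3), hcard =>
    have hane : (supp v).Nonempty := by
      rw [← Finset.card_pos, hcard]; omega
    obtain ⟨a, ha⟩ := hane
    have hbne : ((supp v).erase a).Nonempty := by
      rw [← Finset.card_pos, Finset.card_erase_of_mem ha, hcard]; omega
    obtain ⟨b, hb'⟩ := hbne
    obtain ⟨hba, hb⟩ := Finset.mem_erase.mp hb'
    have hcne : (((supp v).erase a).erase b).Nonempty := by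
      rw [← Finset.card_pos, Finset.card_erase_of_mem hb', Finset.card_erase_of_mem ha, hcard]
      omega
    obtain ⟨c, hc'⟩ := hcne
    obtain ⟨hcb, hc''⟩ := Finset.mem_erase.mp hc'
    obtain ⟨hca, hc⟩ := Finset.mem_erase.mp hc''
    have hlex : ∃ l, l ∉ supp v := by
      by_contra h
      push_neg at h
      exact hvO ((supp_univ_iff v).mp (Finset.eq_univ_iff_forall.mpr h))
    obtain ⟨l, hl⟩ := hlex
    have hla : l ≠ a := fun h => hl (h ▸ ha)
    have hlb : l ≠ b := fun h => hl (h ▸ hb)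
    have hlc : l ≠ c := fun h => hl (h ▸ hc)
    set w : Fin n → ZMod 2 := fun j => if j = a ∨ j = b ∨ j = c ∨ j = l then 1 else 0 with hw
    set S : Finset (Fin n) := insert a (insert b (insert c {l})) with hS
    have hmemS : ∀ j, (j = a ∨ j = b ∨ j = c ∨ j = l) ↔ j ∈ S := by
      intro j; simp [hS]
    have haS : a ∈ S := by simp [hS]
    have hbS : b ∈ S := by simp [hS]
    have hcS : c ∈ S := by simp [hS]
    have hlS : l ∈ S := by simp [hS]
    have hwS : ∀ j, j ∈ S → w j = 1 := fun j hj => if_pos ((hmemS j).mpr hj)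
    have hwS' : ∀ j, j ∉ S → w j = 0 := fun j hj => if_neg (fun h => hj ((hmemS j).mp h))
    have hcardS : S.card = 4 := by
      rw [hS]
      rw [Finset.card_insert_of_notMem (by simp [hba.symm, hca.symm, hla.symm]),
        Finset.card_insert_of_notMem (by simp [hcb.symm, hlb.symm]),
        Finset.card_insert_of_notMem (by simp [hlc.symm]), Finset.card_singleton]
    have hww : w ⬝ᵥ w = 0 := by
      rw [dotProduct]
      have hterm : ∀ j, w j * w j = if j ∈ S then (1:ZMod 2) else 0 := by
        intro j
        by_cases hjS : j ∈ S
        · rw [hwS j hjS, if_pos hjS]; ring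
        · rw [hwS' j hjS, if_neg hjS]; ring
      rw [Finset.sum_congr rfl (fun j _ => hterm j)]
      rw [Finset.sum_ite_mem, Finset.univ_inter, Finset.sum_const, hcardS]
      rw [nsmul_eq_mul]; decide
    have hwv : w ⬝ᵥ v = 1 := by
      rw [dotProduct]
      have hterm : ∀ j, w j * v j = if j ∈ S then v j else 0 := by
        intro j
        by_cases hjS : j ∈ S
        · rw [hwS j hjS, if_pos hjS]; ring
        · rw [hwS' j hjS, if_neg hjS]; ring
      rw [Finset.sum_congr rfl (fun j _ => hterm j)]
      rw [Finset.sum_ite_mem, Finset.univ_inter, hS]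
      rw [Finset.sum_insert (by simp [hba.symm, hca.symm, hla.symm]),
        Finset.sum_insert (by simp [hcb.symm, hlb.symm]),
        Finset.sum_insert (by simp [hlc.symm]), Finset.sum_singleton]
      rw [mem_supp.mp ha, mem_supp.mp hb, mem_supp.mp hc, notMem_supp.mp hl]
      decide
    have hrel : ORel v (v + w) := by
      have := ORel.transvection w v hww
      rwa [hwv, one_smul] at this
    have hsupp' : supp (v + w) = insert l (((supp v).erase a).erase b |>.erase c) := by
      ext j
      rw [mem_supp, Pi.add_apply, Finset.mem_insert, Finset.mem_erase, Finset.mem_erase,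
        Finset.mem_erase, mem_supp]
      by_cases hja : j = a
      · refine iff_of_false ?_ ?_
        · rw [hja, mem_supp.mp ha, hwS a haS]; decide
        · rintro (rfl | ⟨-, -, hne, -⟩)
          · exact hla hja
          · exact hne hja
      · by_cases hjb : j = b
        · refine iff_of_false ?_ ?_
          · rw [hjb, mem_supp.mp hb, hwS b hbS]; decide
          · rintro (rfl | ⟨-, hne, -, -⟩)
            · exact hlb hjb
            · exact hne hjb
        · by_cases hjc : j = c
          · refine iff_of_false ?_ ?_
            · rw [hjc, mem_supp.mp hc, hwS c hcS]
              decide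
            · rintro (rfl | ⟨hne, -, -, -⟩)
              · exact hlc hjc
              · exact hne hjc
          · by_cases hjl : j = l
            · refine iff_of_true ?_ (Or.inl hjl)
              rw [hjl, notMem_supp.mp hl, hwS l hlS]
              decide
            · have hwj : w j = 0 := by
                refine if_neg ?_
                rintro (h | h | h | h)
                exacts [hja h, hjb h, hjc h, hjl h]
              rw [hwj, add_zero]
              constructor
              · intro h; exact Or.inr ⟨hjc, hjb, hja, h⟩
              · rintro (rfl | ⟨-, -, -, h⟩)
                · exact absurd rfl hjl
                · exact h
    have hcard' : (supp (v + w)).card = m + 1 := by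
      rw [hsupp']
      rw [Finset.card_insert_of_notMem (by
        simp only [Finset.mem_erase]
        intro h
        exact hl h.2.2.2)]
      rw [Finset.card_erase_of_mem hc', Finset.card_erase_of_mem hb',
        Finset.card_erase_of_mem ha, hcard]
      omega
    have hv'0 : v + w ≠ 0 := by
      intro h
      have := (supp_zero_iff _).mpr h
      rw [this] at hcard'
      simp at hcard'
    have hkn : m + 3 ≤ n := by
      rw [← hcard]
      exact le_trans (Finset.card_le_card (Finset.subset_univ _)) (by simp)
    have hv'O : v + w ≠ (fun _ => 1) := by
      intro h
      have := (supp_univ_iff _).mpr h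
      rw [this, Finset.card_univ, Fintype.card_fin] at hcard'
      omega
    rcases IH (m+1) (by omega) (v + w) hcard' hv'0 hv'O with ⟨hp, hr⟩ | ⟨hp, hr⟩
    · exact Or.inl ⟨by rw [hrel.dot, hp], hrel.trans hr⟩
    · exact Or.inr ⟨by rw [hrel.dot, hp], hrel.trans hr⟩

noncomputable def invf (n : ℕ) (v : Fin n → ZMod 2) : Fin 4 := by
  classical
  exact if v = 0 then 0 else if v = (fun _ => 1) then 3 else if v ⬝ᵥ v = 1 then 1 else 2

lemma invf_eq {u v : Fin n → ZMod 2} (h : ORel u v) : invf n u = invf n v := by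
  classical
  unfold invf
  by_cases hu0 : u = 0
  · have hv0 : v = 0 := ORel.zero (hu0 ▸ h)
    simp [hu0, hv0]
  · have hv0 : v ≠ 0 := fun hv => hu0 (ORel.zero (hv ▸ h.symm))
    by_cases huO : u = (fun _ => 1)
    · have hvO : v = (fun _ => 1) := ORel.omega (huO ▸ h)
      simp [hu0, hv0, huO, hvO]
    · have hvO : v ≠ (fun _ => 1) := fun hv => huO (ORel.omega (hv ▸ h.symm))
      simp [hu0, hv0, huO, hvO, h.dot]

example (n : ℕ) (hn : 3 ≤ n) :
    (![(0 : Fin n → ZMod 2),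
      (fun j : Fin n => if (j : ℕ) = 0 then 1 else 0),
      (fun j : Fin n => if (j : ℕ) = 0 ∨ (j : ℕ) = 1 then 1 else 0),
      (fun _ : Fin n => 1)] : Fin 4 → _) 1 = E1 n := rfl

example (n : ℕ) (hn : 3 ≤ n) :
    (![(0 : Fin n → ZMod 2),
      (fun j : Fin n => if (j : ℕ) = 0 then 1 else 0),
      (fun j : Fin n => if (j : ℕ) = 0 ∨ (j : ℕ) = 1 then 1 else 0),
      (fun _ : Fin n => 1)] : Fin 4 → _) 3 = fun _ => 1 := rfl

lemma supp_E1 (hn : 3 ≤ n) : supp (E1 n) = {(⟨0, by omega⟩ : Fin n)} := by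
  ext j
  rw [mem_supp, Finset.mem_singleton]
  by_cases h : (j : ℕ) = 0
  · simp [E1, h, Fin.ext_iff]
  · simp only [E1, if_neg h, Fin.ext_iff, h]
    exact iff_of_false (by decide) (by simpa using h)

lemma supp_E2 (hn : 3 ≤ n) : supp (E2 n) = {(⟨0, by omega⟩ : Fin n), (⟨1, by omega⟩ : Fin n)} := by
  ext j
  rw [mem_supp, Finset.mem_insert, Finset.mem_singleton]
  by_cases h : (j : ℕ) = 0 ∨ (j : ℕ) = 1
  · simp only [E2, if_pos h, Fin.ext_iff]
    exact iff_of_true (by trivial) (by simpa using h)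
  · simp only [E2, if_neg h, Fin.ext_iff]
    exact iff_of_false (by decide) (by simpa using h)

lemma dot_E1 (hn : 3 ≤ n) : E1 n ⬝ᵥ E1 n = 1 := by
  rw [dot_card, supp_E1 hn, Finset.card_singleton]; decide

lemma dot_E2 (hn : 3 ≤ n) : E2 n ⬝ᵥ E2 n = 0 := by
  rw [dot_card, supp_E2 hn, Finset.card_insert_of_notMem (by simp [Fin.ext_iff]),
    Finset.card_singleton]
  decide

lemma E1_ne_zero (hn : 3 ≤ n) : E1 n ≠ 0 := fun h => by
  have := congrFun h ⟨0, by omega⟩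
  simp [E1] at this

lemma E2_ne_zero (hn : 3 ≤ n) : E2 n ≠ 0 := fun h => by
  have := congrFun h ⟨0, by omega⟩
  simp [E2] at this

lemma E1_ne_omega (hn : 3 ≤ n) : E1 n ≠ fun _ => 1 := fun h => by
  have := congrFun h ⟨1, by omega⟩
  simp [E1] at this

lemma E2_ne_omega (hn : 3 ≤ n) : E2 n ≠ fun _ => 1 := fun h => by
  have := congrFun h ⟨2, by omega⟩
  simp [E2] at this

lemma omega_ne_zero (hn : 3 ≤ n) : (fun _ : Fin n => (1 : ZMod 2)) ≠ 0 := fun h => by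
  have := congrFun h ⟨0, by omega⟩
  exact (by decide : (1 : ZMod 2) ≠ 0) this

/-- For `n ≥ 3`, the orthogonal group `O(n, F₂)` acting on `F₂ⁿ` has exactly four orbits,
represented by `0`, `e₁`, `e₁+e₂`, and the all-ones vector `Ω`. -/
theorem orthogonal_group_four_orbits (n : ℕ) (hn : 3 ≤ n)
    (reps : Fin 4 → (Fin n → ZMod 2))
    (hreps : reps = ![(0 : Fin n → ZMod 2),
      (fun j : Fin n => if (j : ℕ) = 0 then 1 else 0),
      (fun j : Fin n => if (j : ℕ) = 0 ∨ (j : ℕ) = 1 then 1 else 0),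
      (fun _ : Fin n => 1)]) :
    (∀ v : Fin n → ZMod 2, ∃ i : Fin 4,
      ∃ A : Matrix (Fin n) (Fin n) (ZMod 2), A * Aᵀ = 1 ∧ A.mulVec (reps i) = v) ∧
    (∀ i j : Fin 4, i ≠ j →
      ¬ ∃ A : Matrix (Fin n) (Fin n) (ZMod 2), A * Aᵀ = 1 ∧ A.mulVec (reps i) = reps j) := by
  have h0 : reps 0 = 0 := by rw [hreps]; rfl
  have h1 : reps 1 = E1 n := by rw [hreps]; rfl
  have h2 : reps 2 = E2 n := by rw [hreps]; rfl
  have h3 : reps 3 = fun _ => 1 := by rw [hreps]; rfl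
  constructor
  · intro v
    by_cases hv0 : v = 0
    · exact ⟨0, 1, by simp, by rw [h0, hv0]; simp⟩
    · by_cases hvO : v = fun _ => 1
      · exact ⟨3, 1, by simp, by rw [h3, hvO]; simp⟩
      · rcases key hn (supp v).card v rfl hv0 hvO with ⟨_, hr⟩ | ⟨_, hr⟩
        · obtain ⟨A, hA, hAv⟩ := hr.symm
          exact ⟨1, A, hA, by rw [h1]; exact hAv⟩
        · obtain ⟨A, hA, hAv⟩ := hr.symm
          exact ⟨2, A, hA, by rw [h2]; exact hAv⟩
  · rintro i j hij ⟨A, hA, hAv⟩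
    have h' : ORel (reps i) (reps j) := ⟨A, hA, hAv⟩
    have hinv := invf_eq h'
    have hfix : ∀ m : Fin 4, invf n (reps m) = m := by
      classical
      intro m
      fin_cases m
      · show invf n (reps 0) = 0
        rw [h0]; unfold invf; simp
      · show invf n (reps 1) = 1
        rw [h1]; unfold invf
        rw [if_neg (E1_ne_zero hn), if_neg (E1_ne_omega hn), if_pos (dot_E1 hn)]
      · show invf n (reps 2) = 2
        rw [h2]; unfold invf
        rw [if_neg (E2_ne_zero hn), if_neg (E2_ne_omega hn),
          if_neg (by rw [dot_E2 hn]; decide)]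
      · show invf n (reps 3) = 3
        rw [h3]; unfold invf
        rw [if_neg (omega_ne_zero hn), if_pos rfl]
    rw [hfix i, hfix j] at hinv
    exact hij hinv
end

section
/- For n ≥ 1, the group O(n, F₂) is generated by the n×n permutation matrices together with (in the case n ≥ 4) the single matrix A ⊕ I_{n−4}, where A is the 4×4 matrix over F₂ with 0 on the diagonal and 1 in every off-diagonal entry. -/
/-!
Work on the rows of an orthogonal matrix `M` over `F₂` by right multiplication with generators.
Each row has odd weight, and once the rows indexed by `D` are standard basis vectors, every other
row vanishes on `D`. A remaining row of weight one becomes standard after a transposition. A row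
`v` of weight at least three has three ones `x, y, z` and a zero `p ∉ D`; with `u` the indicator
of `S = {x, y, z, p}`, the orthogonal involution `T_S = 1 + u uᵀ` sends `v` to `v + u`, lowering
its weight by two and fixing the standard rows. Finally, every `T_S` is conjugate under a
permutation matrix to `A ⊕ I_{n-4} = T_{{0,1,2,3}}`.
-/

open Matrix Finset Equiv

namespace OrthogonalGenerators

def indicatorVec {ι R : Type*} [DecidableEq ι] [Zero R] [One R] (S : Finset ι) : ι → R :=
  fun k => if k ∈ S then 1 else 0

section Transvection

variable {ι R : Type*} [DecidableEq ι] [CommRing R]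

def orthTransvection (u : ι → R) : Matrix ι ι R := 1 + vecMulVec u u

lemma transpose_orthTransvection (u : ι → R) : (orthTransvection u)ᵀ = orthTransvection u := by
  simp [orthTransvection, transpose_vecMulVec]

variable [Fintype ι]

lemma vecMul_orthTransvection (v u : ι → R) : v ᵥ* orthTransvection u = v + (v ⬝ᵥ u) • u := by
  simp [orthTransvection, vecMul_add, vecMul_vecMulVec]

lemma orthTransvection_mul_self [CharP R 2] {u : ι → R} (hu : u ⬝ᵥ u = 0) :
    orthTransvection u * orthTransvection u = 1 := by
  simp only [orthTransvection, add_mul, mul_add, one_mul, mul_one, vecMulVec_mul_vecMulVec, hu,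
    zero_smul, vecMulVec_zero, add_zero, add_assoc]
  rw [← two_smul R (vecMulVec u u), CharTwo.two_eq_zero, zero_smul, add_zero]

lemma orthTransvection_mem_orthogonalGroup [CharP R 2] {u : ι → R} (hu : u ⬝ᵥ u = 0) :
    orthTransvection u ∈ orthogonalGroup ι R := by
  rw [mem_orthogonalGroup_iff, transpose_orthTransvection, orthTransvection_mul_self hu]

lemma permMatrix_mul_orthTransvection_mul (σ : Perm ι) (u : ι → R) :
    σ.permMatrix R * orthTransvection u * σ⁻¹.permMatrix R = orthTransvection (u ∘ σ) := by
  rw [PEquiv.toMatrix_toPEquiv_mul, PEquiv.mul_toMatrix_toPEquiv, Perm.inv_def, symm_symm]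
  ext i j
  simp [orthTransvection, one_apply, vecMulVec_apply]

lemma dotProduct_indicatorVec (v : ι → R) (S : Finset ι) :
    v ⬝ᵥ indicatorVec S = ∑ k ∈ S, v k := by
  simp [dotProduct, indicatorVec, Finset.sum_ite_mem]

end Transvection

section Rows

variable {ι R : Type*} [Fintype ι] [DecidableEq ι] [CommRing R]

def RowsEqSingle (M : Matrix ι ι R) (D : Finset ι) : Prop := ∀ j ∈ D, M j = Pi.single j 1

lemma eq_one_of_rowsEqSingle_univ {M : Matrix ι ι R} (hM : RowsEqSingle M univ) : M = 1 := by
  ext i j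
  rw [hM i (mem_univ i), one_eq_pi_single]

lemma dotProduct_row_eq_one_apply {M : Matrix ι ι R} (hM : M ∈ orthogonalGroup ι R) (i j : ι) :
    M i ⬝ᵥ M j = (1 : Matrix ι ι R) i j := by
  rw [← (mem_orthogonalGroup_iff ι R).mp hM, mul_apply']
  rfl

lemma apply_eq_zero_of_row_eq_single {M : Matrix ι ι R} (hM : M ∈ orthogonalGroup ι R) {i j : ι}
    (hj : M j = Pi.single j 1) (hij : i ≠ j) : M i j = 0 := by
  simpa [hj, one_apply_ne hij] using dotProduct_row_eq_one_apply hM i j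

lemma rowsEqSingle_mul_swap {M : Matrix ι ι R} {D : Finset ι} {i p : ι}
    (hD : RowsEqSingle M D) (hi : M i = Pi.single p 1) (hiD : i ∉ D) (hpD : p ∉ D) :
    RowsEqSingle (M * (swap i p).permMatrix R) (insert i D) := by
  intro j hj
  rw [mul_apply_eq_vecMul, vecMul_permMatrix]
  rcases mem_insert.mp hj with rfl | hj
  · rw [hi, Pi.single_comp_equiv, symm_symm, swap_apply_right]
  · rw [hD j hj, Pi.single_comp_equiv, symm_symm,
      swap_apply_of_ne_of_ne (ne_of_mem_of_not_mem hj hiD) (ne_of_mem_of_not_mem hj hpD)]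

lemma rowsEqSingle_mul_orthTransvection {M : Matrix ι ι R} {D S : Finset ι}
    (hD : RowsEqSingle M D) (hSD : Disjoint S D) :
    RowsEqSingle (M * orthTransvection (indicatorVec S)) D := by
  intro j hj
  rw [mul_apply_eq_vecMul, vecMul_orthTransvection, hD j hj, single_dotProduct,
    indicatorVec, if_neg (disjoint_right.mp hSD hj)]
  simp

end Rows

section Binary

variable {ι : Type*} [Fintype ι]

lemma zmod_two_eq_one_iff_ne_zero : ∀ x : ZMod 2, x = 1 ↔ x ≠ 0 := by decide

lemma zmod_two_mul_self : ∀ x : ZMod 2, x * x = x := by decide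

def supp (v : ι → ZMod 2) : Finset ι := {k | v k ≠ 0}

lemma mem_supp {v : ι → ZMod 2} {k : ι} : k ∈ supp v ↔ v k = 1 := by
  simp [supp, zmod_two_eq_one_iff_ne_zero]

lemma sum_eq_card_of_subset_supp {v : ι → ZMod 2} {T : Finset ι} (hT : T ⊆ supp v) :
    ∑ k ∈ T, v k = #T := by
  rw [card_eq_sum_ones, Nat.cast_sum, Nat.cast_one]
  exact sum_congr rfl fun k hk => mem_supp.mp (hT hk)

lemma dotProduct_self_eq_card_supp (v : ι → ZMod 2) : v ⬝ᵥ v = #(supp v) := by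
  rw [dotProduct, sum_congr rfl fun k _ => zmod_two_mul_self (v k), ← sum_filter_ne_zero]
  exact sum_eq_card_of_subset_supp subset_rfl

variable [DecidableEq ι]

lemma odd_card_supp_row {M : Matrix ι ι (ZMod 2)} (hM : M ∈ orthogonalGroup ι (ZMod 2)) (i : ι) :
    Odd #(supp (M i)) := by
  rw [← ZMod.natCast_eq_one_iff_odd, ← dotProduct_self_eq_card_supp,
    dotProduct_row_eq_one_apply hM, one_apply_eq]

lemma card_supp_add_indicatorVec_insert_lt {v : ι → ZMod 2} {T : Finset ι} {p : ι}
    (hT : T ⊆ supp v) (hT2 : 2 ≤ #T) :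
    #(supp (v + indicatorVec (insert p T))) < #(supp v) := by
  have hsub : supp (v + indicatorVec (insert p T)) ⊆ insert p (supp v \ T) := by
    intro k hk
    rw [mem_supp, Pi.add_apply, indicatorVec] at hk
    by_cases hkp : k = p
    · exact mem_insert.mpr (Or.inl hkp)
    by_cases hkT : k ∈ T
    · rw [if_pos (mem_insert_of_mem hkT), mem_supp.mp (hT hkT)] at hk
      exact absurd hk (by decide)
    · rw [if_neg (by simp [hkp, hkT]), add_zero] at hk
      exact mem_insert_of_mem (mem_sdiff.mpr ⟨mem_supp.mpr hk, hkT⟩)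
  have hcard := (card_le_card hsub).trans (card_insert_le _ _)
  rw [card_sdiff_of_subset hT] at hcard
  have := card_le_card hT
  omega

end Binary

section Reduction

variable {ι : Type*} [Fintype ι] [DecidableEq ι]

lemma exists_apply_eq_zero_of_rowsEqSingle {M : Matrix ι ι (ZMod 2)}
    (hM : M ∈ orthogonalGroup ι (ZMod 2)) {D : Finset ι} (hD : RowsEqSingle M D) {i : ι}
    (h2 : 1 < #(supp (M i))) : ∃ p ∉ D, M i p = 0 := by
  by_contra! hne
  obtain ⟨k, hk, hki⟩ := exists_mem_ne h2 i
  have hkD : k ∉ D := fun hkD => by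
    simpa [mem_supp.mp hk] using apply_eq_zero_of_row_eq_single hM (hD k hkD) hki.symm
  -- row `k` vanishes on `D` while row `i` is `1` off `D`, so `M k ⬝ᵥ M i = M k ⬝ᵥ M k`
  have hself : M k ⬝ᵥ M i = M k ⬝ᵥ M k := by
    refine sum_congr rfl fun l _ => ?_
    by_cases hlD : l ∈ D
    · rw [apply_eq_zero_of_row_eq_single hM (hD l hlD) (ne_of_mem_of_not_mem hlD hkD).symm,
        zero_mul, zero_mul]
    · rw [(zmod_two_eq_one_iff_ne_zero _).mpr (hne l hlD), mul_one, zmod_two_mul_self]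
  rw [dotProduct_row_eq_one_apply hM, dotProduct_row_eq_one_apply hM, one_apply_ne hki,
    one_apply_eq] at hself
  exact zero_ne_one hself

lemma supp_row_disjoint {M : Matrix ι ι (ZMod 2)} (hM : M ∈ orthogonalGroup ι (ZMod 2))
    {D : Finset ι} (hD : RowsEqSingle M D) {i : ι} (hiD : i ∉ D) : Disjoint (supp (M i)) D :=
  disjoint_left.mpr fun k hk hkD => by
    simpa [mem_supp.mp hk] using
      apply_eq_zero_of_row_eq_single hM (hD k hkD) (ne_of_mem_of_not_mem hkD hiD).symm

lemma eq_single_of_supp_eq_singleton {v : ι → ZMod 2} {p : ι} (h : supp v = {p}) :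
    v = Pi.single p 1 := by
  ext k
  by_cases hkp : k = p
  · rw [hkp, Pi.single_eq_same, ← mem_supp, h, mem_singleton]
  · rw [Pi.single_eq_of_ne hkp, ← not_ne_iff, ← zmod_two_eq_one_iff_ne_zero, ← mem_supp, h,
      mem_singleton]
    exact hkp

lemma exists_orthTransvection_card_supp_lt {M : Matrix ι ι (ZMod 2)}
    (hM : M ∈ orthogonalGroup ι (ZMod 2)) {D : Finset ι} (hD : RowsEqSingle M D) {i : ι}
    (hiD : i ∉ D) (h3 : 3 ≤ #(supp (M i))) :
    ∃ S : Finset ι, #S = 4 ∧ Disjoint S D ∧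
      #(supp ((M * orthTransvection (indicatorVec S) : Matrix ι ι (ZMod 2)) i)) <
        #(supp (M i)) := by
  obtain ⟨p, hpD, hp⟩ := exists_apply_eq_zero_of_rowsEqSingle hM hD (i := i) (by omega)
  obtain ⟨T, hT, hT3⟩ := exists_subset_card_eq h3
  have hpT : p ∉ T := fun hpT => by simpa [hp] using mem_supp.mp (hT hpT)
  refine ⟨insert p T, by rw [card_insert_of_notMem hpT, hT3],
    disjoint_insert_left.mpr ⟨hpD, (supp_row_disjoint hM hD hiD).mono_left hT⟩, ?_⟩
  have hdot : M i ⬝ᵥ indicatorVec (insert p T) = 1 := by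
    rw [dotProduct_indicatorVec, sum_insert hpT, hp, zero_add, sum_eq_card_of_subset_supp hT, hT3]
    decide
  rw [mul_apply_eq_vecMul, vecMul_orthTransvection, hdot, one_smul]
  exact card_supp_add_indicatorVec_insert_lt hT (by omega)

end Reduction

section Closure

variable (ι : Type*) [DecidableEq ι]

def orthGenerators : Set (Matrix ι ι (ZMod 2)) :=
  Set.range (fun σ : Perm ι => σ.permMatrix (ZMod 2)) ∪
    {T | ∃ S : Finset ι, #S = 4 ∧ T = orthTransvection (indicatorVec S)}

variable {ι}

lemma transpose_mem_orthGenerators {g : Matrix ι ι (ZMod 2)} (hg : g ∈ orthGenerators ι) :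
    gᵀ ∈ orthGenerators ι := by
  rcases hg with ⟨σ, rfl⟩ | ⟨S, hS, rfl⟩
  · exact Or.inl ⟨σ⁻¹, (transpose_permMatrix σ).symm⟩
  · exact Or.inr ⟨S, hS, transpose_orthTransvection _⟩

variable [Fintype ι]

lemma indicatorVec_dotProduct_self_of_card_eq_four {S : Finset ι} (hS : #S = 4) :
    indicatorVec S ⬝ᵥ (indicatorVec S : ι → ZMod 2) = 0 := by
  rw [dotProduct_indicatorVec, sum_eq_card_of_subset_supp fun k hk => ?_, hS]
  · decide
  · simp [mem_supp, indicatorVec, hk]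

lemma orthGenerators_subset_orthogonalGroup :
    orthGenerators ι ⊆ orthogonalGroup ι (ZMod 2) := by
  rintro g (⟨σ, rfl⟩ | ⟨S, hS, rfl⟩)
  · rw [SetLike.mem_coe, mem_orthogonalGroup_iff, transpose_permMatrix, ← permMatrix_mul,
      inv_mul_cancel, permMatrix_one]
  · exact orthTransvection_mem_orthogonalGroup (indicatorVec_dotProduct_self_of_card_eq_four hS)

lemma mem_closure_of_mul_mem {M g : Matrix ι ι (ZMod 2)} (hg : g ∈ orthGenerators ι)
    (h : M * g ∈ Submonoid.closure (orthGenerators ι)) :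
    M ∈ Submonoid.closure (orthGenerators ι) := by
  have hgg : g * gᵀ = 1 :=
    (mem_orthogonalGroup_iff ι _).mp (orthGenerators_subset_orthogonalGroup hg)
  rw [← mul_one M, ← hgg, ← mul_assoc]
  exact mul_mem h (Submonoid.subset_closure (transpose_mem_orthGenerators hg))

lemma mem_closure_of_rowsEqSingle_insert {D : Finset ι} {i : ι} (hiD : i ∉ D)
    (ih : ∀ M ∈ orthogonalGroup ι (ZMod 2), RowsEqSingle M (insert i D) →
      M ∈ Submonoid.closure (orthGenerators ι))
    {M : Matrix ι ι (ZMod 2)} (hM : M ∈ orthogonalGroup ι (ZMod 2)) (hD : RowsEqSingle M D) :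
    M ∈ Submonoid.closure (orthGenerators ι) := by
  induction hw : #(supp (M i)) using Nat.strong_induction_on generalizing M with
  | _ w ihw =>
  obtain ⟨k, rfl⟩ := hw ▸ odd_card_supp_row hM i
  rcases k with _ | k
  · obtain ⟨p, hp⟩ := card_eq_one.mp hw
    have hpD : p ∉ D :=
      disjoint_left.mp (supp_row_disjoint hM hD hiD) (hp ▸ mem_singleton_self p)
    have hσ : (swap i p).permMatrix (ZMod 2) ∈ orthGenerators ι := Or.inl ⟨_, rfl⟩
    exact mem_closure_of_mul_mem hσ <| ih _
      (mul_mem hM (orthGenerators_subset_orthogonalGroup hσ))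
      (rowsEqSingle_mul_swap hD (eq_single_of_supp_eq_singleton hp) hiD hpD)
  · obtain ⟨S, hS, hSD, hlt⟩ := exists_orthTransvection_card_supp_lt hM hD hiD (by omega)
    have hT : orthTransvection (indicatorVec S) ∈ orthGenerators ι := Or.inr ⟨S, hS, rfl⟩
    exact mem_closure_of_mul_mem hT <| ihw _ (hw ▸ hlt)
      (mul_mem hM (orthGenerators_subset_orthogonalGroup hT))
      (rowsEqSingle_mul_orthTransvection hD hSD) rfl

theorem closure_orthGenerators :
    Submonoid.closure (orthGenerators ι) = orthogonalGroup ι (ZMod 2) := by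
  refine le_antisymm (Submonoid.closure_le.mpr orthGenerators_subset_orthogonalGroup) ?_
  suffices h : ∀ D : Finset ι, ∀ M ∈ orthogonalGroup ι (ZMod 2), RowsEqSingle M D →
      M ∈ Submonoid.closure (orthGenerators ι) from
    fun M hM => h ∅ M hM fun j hj => absurd hj (notMem_empty j)
  refine fun D => Finset.strongDownwardInduction (n := Fintype.card ι)
    (p := fun D => ∀ M ∈ orthogonalGroup ι (ZMod 2), RowsEqSingle M D →
      M ∈ Submonoid.closure (orthGenerators ι)) (fun D ih _ M hM hD => ?_) D (card_le_univ D)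
  by_cases hDu : ∃ i, i ∉ D
  · obtain ⟨i, hiD⟩ := hDu
    exact mem_closure_of_rowsEqSingle_insert hiD (ih (card_le_univ _) (ssubset_insert hiD)) hM hD
  · rw [eq_one_of_rowsEqSingle_univ (M := M) fun j _ => hD j (not_exists_not.mp hDu j)]
    exact one_mem _

end Closure


lemma exists_perm_comp_indicatorVec {ι R : Type*} [Fintype ι] [DecidableEq ι] [Zero R] [One R]
    {S S' : Finset ι} (h : #S = #S') :
    ∃ σ : Perm ι, (indicatorVec S' : ι → R) ∘ σ = indicatorVec S := by
  let e : {k // k ∈ S} ≃ {k // k ∈ S'} := Fintype.equivOfCardEq (by simpa using h)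
  refine ⟨e.extendSubtype, funext fun k => ?_⟩
  by_cases hk : k ∈ S
  · simp [indicatorVec, hk, e.extendSubtype_mem k hk]
  · simp [indicatorVec, hk, e.extendSubtype_not_mem k hk]

section Fin

variable (n : ℕ)

def blockA : Matrix (Fin n) (Fin n) (ZMod 2) :=
  of fun i j : Fin n =>
    if (i : ℕ) < 4 ∧ (j : ℕ) < 4 then (if i = j then 0 else 1) else (if i = j then 1 else 0)

def finGenerators : Set (Matrix (Fin n) (Fin n) (ZMod 2)) :=
  {P | ∃ σ : Perm (Fin n), P = of fun i j => if σ j = i then 1 else 0} ∪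
    {B | 4 ≤ n ∧ B = blockA n}

lemma blockA_eq_orthTransvection :
    blockA n = orthTransvection (indicatorVec {i : Fin n | (i : ℕ) < 4}) := by
  ext i j
  by_cases hij : i = j
  · subst hij
    by_cases hi : (i : ℕ) < 4 <;>
      simp [blockA, orthTransvection, indicatorVec, vecMulVec_apply, hi, CharTwo.add_self_eq_zero]
  · by_cases hi : (i : ℕ) < 4 <;> by_cases hj : (j : ℕ) < 4 <;>
      simp [blockA, orthTransvection, indicatorVec, vecMulVec_apply, one_apply_ne hij, hij, hi, hj]

variable {n}

lemma of_eq_permMatrix_inv (σ : Perm (Fin n)) :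
    (of fun i j => if σ j = i then 1 else 0 : Matrix (Fin n) (Fin n) (ZMod 2)) =
      σ⁻¹.permMatrix (ZMod 2) := by
  ext i j
  simp only [of_apply, PEquiv.toMatrix_apply, Perm.inv_def, toPEquiv_apply, Option.mem_some_iff,
    symm_apply_eq]
  exact if_congr eq_comm rfl rfl

lemma finGenerators_subset_orthGenerators : finGenerators n ⊆ orthGenerators (Fin n) := by
  rintro g (⟨σ, rfl⟩ | ⟨h4, rfl⟩)
  · exact Or.inl ⟨σ⁻¹, (of_eq_permMatrix_inv σ).symm⟩
  · refine Or.inr ⟨_, ?_, blockA_eq_orthTransvection n⟩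
    rw [Fin.card_filter_val_lt, min_eq_right h4]

lemma permMatrix_mem_closure_finGenerators (σ : Perm (Fin n)) :
    σ.permMatrix (ZMod 2) ∈ Submonoid.closure (finGenerators n) :=
  Submonoid.subset_closure (Or.inl ⟨σ⁻¹, by rw [of_eq_permMatrix_inv, inv_inv]⟩)

lemma orthGenerators_subset_closure_finGenerators :
    orthGenerators (Fin n) ⊆ Submonoid.closure (finGenerators n) := by
  rintro g (⟨σ, rfl⟩ | ⟨S, hS, rfl⟩)
  · exact permMatrix_mem_closure_finGenerators σ
  have h4 : 4 ≤ n := hS ▸ (card_le_univ S).trans (Fintype.card_fin n).le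
  obtain ⟨σ, hσ⟩ := exists_perm_comp_indicatorVec (R := ZMod 2) (S := S)
    (S' := {i : Fin n | (i : ℕ) < 4}) (by rw [hS, Fin.card_filter_val_lt, min_eq_right h4])
  rw [← hσ, ← permMatrix_mul_orthTransvection_mul, ← blockA_eq_orthTransvection]
  exact mul_mem (mul_mem (permMatrix_mem_closure_finGenerators σ)
    (Submonoid.subset_closure (Or.inr ⟨h4, rfl⟩))) (permMatrix_mem_closure_finGenerators σ⁻¹)

theorem closure_finGenerators :
    Submonoid.closure (finGenerators n) = orthogonalGroup (Fin n) (ZMod 2) := by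
  rw [← closure_orthGenerators]
  exact le_antisymm (Submonoid.closure_mono finGenerators_subset_orthGenerators)
    (Submonoid.closure_le.mpr orthGenerators_subset_closure_finGenerators)

end Fin

end OrthogonalGenerators

open OrthogonalGenerators in
theorem orthogonal_group_generators_general (n : ℕ)
    (M : Matrix (Fin n) (Fin n) (ZMod 2)) :
    M * Mᵀ = 1 ↔
      M ∈ Submonoid.closure
        ({P : Matrix (Fin n) (Fin n) (ZMod 2) |
            ∃ σ : Equiv.Perm (Fin n), P = Matrix.of fun i j => if σ j = i then 1 else 0} ∪
         {B : Matrix (Fin n) (Fin n) (ZMod 2) | 4 ≤ n ∧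
            B = Matrix.of fun i j : Fin n =>
              if (i : ℕ) < 4 ∧ (j : ℕ) < 4 then (if i = j then 0 else 1)
              else (if i = j then 1 else 0)}) := by
  rw [← mem_orthogonalGroup_iff, ← closure_finGenerators]
  rfl

/-- For `n ≥ 1`, the group `O(n, F₂)` is generated by the permutation matrices together with
(when `n ≥ 4`) the matrix `A ⊕ I_{n-4}`, where `A` is the 4×4 matrix with `0` on the diagonal
and `1` off the diagonal. -/
theorem orthogonal_group_generators (n : ℕ) (hn : 1 ≤ n)
    (M : Matrix (Fin n) (Fin n) (ZMod 2)) :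
    M * Mᵀ = 1 ↔
      M ∈ Submonoid.closure
        ({P : Matrix (Fin n) (Fin n) (ZMod 2) |
            ∃ σ : Equiv.Perm (Fin n), P = Matrix.of fun i j => if σ j = i then 1 else 0} ∪
         {B : Matrix (Fin n) (Fin n) (ZMod 2) | 4 ≤ n ∧
            B = Matrix.of fun i j : Fin n =>
              if (i : ℕ) < 4 ∧ (j : ℕ) < 4 then (if i = j then 0 else 1)
              else (if i = j then 1 else 0)}) :=
  orthogonal_group_generators_general n M
end

section
/- Let V be an even-dimensional F₂-vector space with a nondegenerate symmetric non-alternating (orthogonal) bilinear form b, and let Ω ∈ V be the unique vector with b(v, Ω) = b(v, v) for all v. For an involutive isometry σ, define (mσ)(v) = σ(v) + b(v,v)·Ω. Then mσ is again an involutive isometry of (V, b), and m(mσ) = σ. -/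
open Module

/-- Key lemma: for a nondegenerate symmetric bilinear form over `F₂` with
characteristic vector `Ω`, `B Ω Ω = finrank mod 2`. -/
theorem omega_self (n : ℕ) : ∀ (V : Type u) [AddCommGroup V] [Module (ZMod 2) V]
    [FiniteDimensional (ZMod 2) V], finrank (ZMod 2) V = n →
    ∀ (B : V →ₗ[ZMod 2] V →ₗ[ZMod 2] ZMod 2),
    (∀ x y, B x y = B y x) →
    (∀ x, (∀ y, B x y = 0) → x = 0) →
    ∀ (Ω : V), (∀ v, B v Ω = B v v) → B Ω Ω = (n : ZMod 2) := by
  induction n using Nat.strong_induction_on with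
  | _ n IH =>
    intro V _ _ _ hrank B hsymm hnd Ω hΩ
    by_cases hc : ∃ v, B v v ≠ 0
    · -- non-alternating: split off a vector with B v v = 1
      obtain ⟨v, hv⟩ := hc
      have hv1 : B v v = 1 := by
        have : ∀ c : ZMod 2, c ≠ 0 → c = 1 := by decide
        exact this _ hv
      set W := LinearMap.ker (B v) with hW
      have hsurj : Function.Surjective (B v) := by
        intro c
        exact ⟨c • v, by simp [hv1]⟩
      have hrankW : finrank (ZMod 2) W + 1 = n := by
        have h1 := LinearMap.finrank_range_add_finrank_ker (B v)
        rw [LinearMap.range_eq_top.mpr hsurj, finrank_top, Module.finrank_self, hrank] at h1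
        rw [hW]
        omega
      -- restricted form
      set B' : W →ₗ[ZMod 2] W →ₗ[ZMod 2] ZMod 2 := B.compl₁₂ W.subtype W.subtype with hB'
      have hB'app : ∀ x y : W, B' x y = B x y := fun x y => rfl
      have hΩW : Ω - v ∈ W := by
        simp [hW, LinearMap.mem_ker, map_sub, hΩ v, hv1]
      have hΩ' : ∀ w : W, B' w ⟨Ω - v, hΩW⟩ = B' w w := by
        rintro ⟨w, hw⟩
        have hwv : B w v = 0 := by rw [hsymm]; exact hw
        simp only [hB'app, map_sub, hΩ w, hwv]
        ring
      have hnd' : ∀ x : W, (∀ y : W, B' x y = 0) → x = 0 := by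
        rintro ⟨w, hw⟩ h
        have hwv : B w v = 0 := by rw [hsymm]; exact hw
        have : ∀ y : V, B w y = 0 := by
          intro y
          have hy : y - (B v y) • v ∈ W := by
            simp [hW, LinearMap.mem_ker, map_sub, map_smul, hv1, smul_eq_mul]
          have := h ⟨_, hy⟩
          simp only [hB'app] at this
          simp only [map_sub, map_smul, smul_eq_mul, hwv, mul_zero, sub_zero] at this
          exact this
        have := hnd w this
        exact Subtype.ext this
      have key := IH (finrank (ZMod 2) W) (by omega) W rfl B' (fun x y => hsymm x y) hnd' _ hΩ'
      have key2 : B (Ω - v) (Ω - v) = ((finrank (ZMod 2) W : ℕ) : ZMod 2) := key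
      have h2 : (2 : ZMod 2) = 0 := by decide
      have hΩv : B Ω v = B v v := by rw [hsymm]; exact hΩ v
      simp only [map_sub, LinearMap.sub_apply, hΩ Ω, hΩv, hv1] at key2
      have : ((n : ℕ) : ZMod 2) = ((finrank (ZMod 2) W : ℕ) : ZMod 2) + 1 := by
        rw [← hrankW]; push_cast; ring
      have hvΩ : B v Ω = 1 := by rw [hΩ v, hv1]
      linear_combination key2 + hvΩ - this
    · -- alternating case
      push_neg at hc
      have hΩ0 : Ω = 0 := by
        apply hnd
        intro y
        rw [hsymm, hΩ y, hc y]
      by_cases hn : n = 0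
      · simp [hΩ0, hn]
      · -- n ≥ 1: find x ≠ 0, then y with B x y = 1
        have hpos : 0 < finrank (ZMod 2) V := by omega
        haveI : Nontrivial V := Module.nontrivial_of_finrank_pos hpos
        obtain ⟨x, hx⟩ := exists_ne (0 : V)
        have hxy : ∃ y, B x y ≠ 0 := by
          by_contra h
          push_neg at h
          exact hx (hnd x h)
        obtain ⟨y, hy⟩ := hxy
        have hxy1 : B x y = 1 := by
          have : ∀ c : ZMod 2, c ≠ 0 → c = 1 := by decide
          exact this _ hy
        have hyx1 : B y x = 1 := by rw [← hsymm, hxy1]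
        set f : V →ₗ[ZMod 2] ZMod 2 × ZMod 2 := (B x).prod (B y) with hf
        have hsurj : Function.Surjective f := by
          rintro ⟨a, b⟩
          refine ⟨b • x + a • y, ?_⟩
          simp [hf, LinearMap.prod_apply, map_add, map_smul, smul_eq_mul, hxy1, hyx1, hc]
        set W := LinearMap.ker f with hW
        have hrankW : finrank (ZMod 2) W + 2 = n := by
          have h1 := LinearMap.finrank_range_add_finrank_ker f
          rw [LinearMap.range_eq_top.mpr hsurj, finrank_top, Module.finrank_prod,
            Module.finrank_self, hrank] at h1
          rw [hW]
          omega
        set B' : W →ₗ[ZMod 2] W →ₗ[ZMod 2] ZMod 2 := B.compl₁₂ W.subtype W.subtype with hB'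
        have hB'app : ∀ x y : W, B' x y = B x y := fun x y => rfl
        have hΩ' : ∀ w : W, B' w (0 : W) = B' w w := by
          rintro ⟨w, hw⟩
          simp only [hB'app]
          simp [hc w]
        have hnd' : ∀ z : W, (∀ u : W, B' z u = 0) → z = 0 := by
          rintro ⟨w, hw⟩ h
          have hw' : B x w = 0 ∧ B y w = 0 := by
            simpa [hW, LinearMap.mem_ker, hf, LinearMap.prod_apply, Prod.ext_iff] using hw
          have hwx : B w x = 0 := by rw [hsymm]; exact hw'.1
          have hwy : B w y = 0 := by rw [hsymm]; exact hw'.2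
          have : ∀ z : V, B w z = 0 := by
            intro z
            have hz : z - (B y z) • x - (B x z) • y ∈ W := by
              simp [hW, LinearMap.mem_ker, hf, map_sub, map_smul, smul_eq_mul,
                hxy1, hyx1, hc x, hc y, Prod.ext_iff]
            have := h ⟨_, hz⟩
            simp only [hB'app] at this
            simp only [map_sub, map_smul, smul_eq_mul, hwx, hwy, mul_zero, sub_zero] at this
            exact this
          exact Subtype.ext (hnd w this)
        have key := IH (finrank (ZMod 2) W) (by omega) W rfl B' (fun a b => hsymm a b) hnd' 0 hΩ'
        have h0 : B' 0 0 = 0 := by simp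
        rw [h0] at key
        rw [hΩ0]
        simp only [map_zero, LinearMap.zero_apply]
        have : ((n : ℕ) : ZMod 2) = ((finrank (ZMod 2) W : ℕ) : ZMod 2) + 2 := by
          rw [← hrankW]; push_cast; ring
        rw [this, ← key]
        decide

/-- In the even-dimensional orthogonal case over `F₂`, the mirror `mσ(v) = σ(v) + b(v,v)·Ω`
of an involutive isometry `σ` is again a (linear) involutive isometry, and `m(mσ) = σ`. -/
theorem mirror_involution (V : Type*) [AddCommGroup V] [Module (ZMod 2) V]
    [FiniteDimensional (ZMod 2) V]
    (B : V →ₗ[ZMod 2] V →ₗ[ZMod 2] ZMod 2)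
    (hsymm : ∀ x y, B x y = B y x)
    (hnd : ∀ x, (∀ y, B x y = 0) → x = 0)
    (horth : ∃ v, B v v ≠ 0)
    (heven : Even (Module.finrank (ZMod 2) V))
    (Ω : V) (hΩ : ∀ v, B v Ω = B v v)
    (σ : V →ₗ[ZMod 2] V)
    (hinv : σ ∘ₗ σ = LinearMap.id)
    (hiso : ∀ x y, B (σ x) (σ y) = B x y)
    (mσ : V → V) (hm : ∀ v, mσ v = σ v + (B v v) • Ω) :
    IsLinearMap (ZMod 2) mσ ∧
    (∀ x y, B (mσ x) (mσ y) = B x y) ∧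
    (∀ v, mσ (mσ v) = v) ∧
    (∀ v, mσ v + (B v v) • Ω = σ v) := by
  have h2 : (2 : ZMod 2) = 0 := by decide
  have hsq : ∀ c : ZMod 2, c * c = c := by decide
  -- B Ω Ω = 0 from evenness
  have hωn : B Ω Ω = ((finrank (ZMod 2) V : ℕ) : ZMod 2) :=
    omega_self (finrank (ZMod 2) V) V rfl B hsymm hnd Ω hΩ
  have hω : B Ω Ω = 0 := by
    obtain ⟨k, hk⟩ := heven
    rw [hωn, hk]
    push_cast
    linear_combination (k : ZMod 2) * h2
  -- q is additive
  have hq_add : ∀ x y : V, B (x + y) (x + y) = B x x + B y y := by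
    intro x y
    simp only [map_add, LinearMap.add_apply]
    linear_combination (B x y) * h2 + (hsymm y x)
  have hq_smul : ∀ (c : ZMod 2) (x : V), B (c • x) (c • x) = c * B x x := by
    intro c x
    simp only [map_smul, LinearMap.smul_apply, smul_eq_mul]
    rw [← mul_assoc, hsq]
  -- σ fixes Ω
  have hσσ : ∀ v, σ (σ v) = v := by
    intro v
    have := LinearMap.congr_fun hinv v
    simpa using this
  have hσΩ : σ Ω = Ω := by
    have : ∀ y, B (σ Ω - Ω) y = 0 := by
      intro y
      have h1 : B y (σ Ω) = B y y := by
        calc B y (σ Ω) = B (σ (σ y)) (σ Ω) := by rw [hσσ]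
          _ = B (σ y) Ω := hiso _ _
          _ = B (σ y) (σ y) := hΩ _
          _ = B y y := hiso _ _
      rw [map_sub, LinearMap.sub_apply, hsymm (σ Ω) y, hsymm Ω y, h1, hΩ y]
      ring
    exact sub_eq_zero.mp (hnd _ this)
  -- isometry
  have hisom : ∀ x y, B (mσ x) (mσ y) = B x y := by
    intro x y
    have hxΩ : B (σ x) Ω = B x x := by rw [hΩ, hiso]
    have hyΩ : B (σ y) Ω = B y y := by rw [hΩ, hiso]
    have hΩy : B Ω (σ y) = B y y := by rw [hsymm, hyΩ]
    rw [hm, hm]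
    simp only [map_add, LinearMap.add_apply, map_smul, LinearMap.smul_apply, smul_eq_mul]
    rw [hiso, hxΩ, hΩy, hω]
    linear_combination (B x x * B y y) * h2
  -- quadratic form preserved by mσ
  have hqm : ∀ v, B (mσ v) (mσ v) = B v v := fun v => hisom v v
  constructor
  · constructor
    · intro x y
      rw [hm, hm, hm, map_add, hq_add]
      module
    · intro c x
      rw [hm, hm, map_smul, hq_smul]
      module
  refine ⟨hisom, ?_, ?_⟩
  · intro v
    rw [hm (mσ v), hqm, hm v, map_add, hσσ, map_smul, hσΩ]
    abel_nf
    rw [show ((2 : ℤ) • ((B v v) • Ω)) = ((2 : ZMod 2) * B v v) • Ω by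
      push_cast; rw [mul_smul]; norm_num [two_smul]]
    rw [h2]
    simp
  · intro v
    rw [hm]
    rw [add_assoc, ← add_smul]
    rw [show B v v + B v v = 2 * B v v by ring, h2]
    simp
end

section
/- For the swap involution θ on F₂^{2r} (with orthonormal basis x₁,y₁,…,x_r,y_r and θ exchanging xᵢ and yᵢ), the mirror involution mθ, defined by (mθ)(v) = θ(v) + (v·v)Ω where Ω is the all-ones vector, satisfies: rank(mθ + Id) = r if r is even, and rank(mθ + Id) = r − 1 if r is odd. -/
/-- For the swap involution `θ` on `F₂^{2r}` (coordinates indexed by `Fin r × Fin 2`, with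
`θ` exchanging `xᵢ = e_(i,0)` and `yᵢ = e_(i,1)`), its mirror
`mθ(v) = θ(v) + (v·v)·Ω` (with `Ω` the all-ones vector) satisfies
`rank(mθ + Id) = r` if `r` is even and `rank(mθ + Id) = r - 1` if `r` is odd. -/
theorem rank_of_mirror_swap (r : ℕ)
    (mθ : (Fin r × Fin 2 → ZMod 2) →ₗ[ZMod 2] (Fin r × Fin 2 → ZMod 2))
    (hm : ∀ v p, mθ v p = v (p.1, p.2 + 1) + ∑ q : Fin r × Fin 2, v q * v q) :
    Module.finrank (ZMod 2) (LinearMap.range (mθ + LinearMap.id)) =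
      if Even r then r else r - 1 := by
  classical
  set π : (Fin r × Fin 2 → ZMod 2) →ₗ[ZMod 2] (Fin r → ZMod 2) :=
    { toFun := fun v i => v (i, 0) + v (i, 1) + ∑ q : Fin r × Fin 2, v q
      map_add' := by
        intro u v; funext i
        simp only [Pi.add_apply, Finset.sum_add_distrib]; ring
      map_smul' := by
        intro c v; funext i
        simp only [Pi.smul_apply, smul_eq_mul, RingHom.id_apply]
        rw [← Finset.mul_sum]; ring } with hπ
  set g : (Fin r → ZMod 2) →ₗ[ZMod 2] (Fin r × Fin 2 → ZMod 2) :=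
    { toFun := fun u p => u p.1
      map_add' := by intro u v; rfl
      map_smul' := by intro c v; rfl } with hg
  have hginj : Function.Injective g := by
    intro u v huv
    funext i
    have := congrFun huv (i, 0)
    simpa [hg] using this
  have hsq : ∀ v : Fin r × Fin 2 → ZMod 2,
      (∑ q : Fin r × Fin 2, v q * v q) = ∑ q : Fin r × Fin 2, v q := by
    intro v; refine Finset.sum_congr rfl fun q _ => ?_
    have : ∀ x : ZMod 2, x * x = x := by decide
    exact this _
  have hcomp : mθ + LinearMap.id = g.comp π := by
    ext v p
    rcases p with ⟨i, j⟩
    simp only [LinearMap.add_apply, LinearMap.id_apply, Pi.add_apply, LinearMap.comp_apply, hm,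
      hsq, hπ, hg, LinearMap.coe_mk, AddHom.coe_mk]
    fin_cases j <;> simp <;> ring
  have hrange : LinearMap.range (mθ + LinearMap.id) =
      Submodule.map g (LinearMap.range π) := by
    rw [hcomp, LinearMap.range_comp]
  rw [hrange, ← (Submodule.equivMapOfInjective g hginj (LinearMap.range π)).finrank_eq]
  by_cases hr : Even r
  · have hr2 : (r : ZMod 2) = 0 :=
      (ZMod.natCast_eq_zero_iff r 2).2 hr.two_dvd
    have hsurj : LinearMap.range π = ⊤ := by
      rw [LinearMap.range_eq_top]
      intro t
      refine ⟨fun p => if p.2 = 0 then t p.1 + ∑ k, t k else 0, ?_⟩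
      funext i
      have hS : (∑ q : Fin r × Fin 2,
          (fun p : Fin r × Fin 2 => if p.2 = 0 then t p.1 + ∑ k, t k else 0) q)
          = ∑ k, t k := by
        rw [Fintype.sum_prod_type]
        simp only [Fin.sum_univ_two]
        norm_num
        rw [Finset.sum_add_distrib, Finset.sum_const, Finset.card_univ, Fintype.card_fin,
          nsmul_eq_mul, hr2, zero_mul, add_zero]
      simp only [hπ, LinearMap.coe_mk, AddHom.coe_mk, hS]
      norm_num
      rw [add_assoc, CharTwo.add_self_eq_zero, add_zero]
    rw [hsurj, if_pos hr, finrank_top]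
    simp
  · have hr2 : (r : ZMod 2) = 1 := by
      have h1 : r % 2 = 1 := Nat.odd_iff.1 (Nat.not_even_iff_odd.1 hr)
      rw [← ZMod.natCast_mod r 2, h1, Nat.cast_one]
    set σ : (Fin r → ZMod 2) →ₗ[ZMod 2] ZMod 2 :=
      { toFun := fun t => ∑ i, t i
        map_add' := by intro u v; simp [Finset.sum_add_distrib]
        map_smul' := by intro c v; simp only [Pi.smul_apply, smul_eq_mul, RingHom.id_apply]
                        rw [Finset.mul_sum] } with hσ
    have hrπ : LinearMap.range π = LinearMap.ker σ := by
      apply le_antisymm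
      · rintro t ⟨v, rfl⟩
        simp only [LinearMap.mem_ker, hσ, hπ, LinearMap.coe_mk, AddHom.coe_mk]
        rw [Finset.sum_add_distrib, Finset.sum_add_distrib, Finset.sum_const, Finset.card_univ,
          Fintype.card_fin, nsmul_eq_mul, hr2, one_mul]
        have hsum : ((∑ i, v (i, 0)) + ∑ i, v (i, 1)) = ∑ q : Fin r × Fin 2, v q := by
          rw [Fintype.sum_prod_type]
          simp only [Fin.sum_univ_two, Finset.sum_add_distrib]
        rw [hsum, CharTwo.add_self_eq_zero]
      · intro t ht
        simp only [LinearMap.mem_ker, hσ, LinearMap.coe_mk, AddHom.coe_mk] at ht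
        refine ⟨fun p => if p.2 = 0 then t p.1 else 0, ?_⟩
        funext i
        have hS : (∑ q : Fin r × Fin 2,
            (fun p : Fin r × Fin 2 => if p.2 = 0 then t p.1 else 0) q) = 0 := by
          rw [Fintype.sum_prod_type]
          simp only [Fin.sum_univ_two]
          norm_num
          exact ht
        simp only [hπ, LinearMap.coe_mk, AddHom.coe_mk, hS]
        norm_num
    have hσsurj : LinearMap.range σ = ⊤ := by
      rw [LinearMap.range_eq_top]
      intro x
      refine ⟨fun _ => x, ?_⟩
      simp [hσ, Finset.sum_const, Finset.card_univ, nsmul_eq_mul, hr2]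
    have hrn := LinearMap.finrank_range_add_finrank_ker σ
    rw [hσsurj, finrank_top] at hrn
    simp only [Module.finrank_self, Module.finrank_pi, Fintype.card_fin] at hrn
    rw [hrπ, if_neg hr]
    omega
end

section
/- Every matrix of determinant −1 in GL₂(ℤ) of order 2 is conjugate in GL₂(ℤ) to either S = [[1,0],[0,−1]] or T = [[0,1],[1,0]]. -/
/-!
An involution `M ≠ -1` of `ℤ²` fixes a nonzero vector (any nonzero column of `M + 1`),
hence a primitive one `v`. Completing `v` to a basis of `ℤ²` conjugates `M` to `!![1, b; 0, -1]`,
the lower right entry being forced by `det M = -1`. Conjugating by `!![1, t; 0, 1]` changes `b`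
by `2t`, so `b` may be taken in `{0, 1}`; `b = 0` gives `S`, and `b = 1` gives `T` in the basis
`e₂, e₁ - e₂`.
-/

open Matrix

namespace Matrix

section

variable {n R : Type*} [Fintype n] [DecidableEq n] [CommRing R]

theorem exists_inv_mul_mul_eq_of_isConj {A B : Matrix n n R} (h : IsConj A B) :
    ∃ P : Matrix n n R, IsUnit P.det ∧ P⁻¹ * A * P = B := by
  obtain ⟨c, hc⟩ := h
  refine ⟨↑c⁻¹, (isUnit_iff_isUnit_det _).mp (Units.isUnit _), ?_⟩
  rw [inv_eq_left_inv (Units.mul_inv c), hc.eq, Matrix.mul_assoc, Units.mul_inv, Matrix.mul_one]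

theorem exists_mulVec_eq_self_of_mul_self_eq_one {M : Matrix n n R} (hM : M * M = 1)
    (hne : M ≠ -1) : ∃ v ≠ 0, M *ᵥ v = v := by
  obtain ⟨i, j, hij⟩ : ∃ i j, (M + 1) i j ≠ 0 := by
    by_contra! h
    exact hne (eq_neg_of_add_eq_zero_left (Matrix.ext h))
  refine ⟨(M + 1).col j, fun h => hij (congrFun h i), ?_⟩
  rw [← mulVec_single_one, mulVec_mulVec, Matrix.mul_add, hM, Matrix.mul_one, add_comm]

end

theorem exists_isCoprime_mulVec_eq_self {R : Type*} [EuclideanDomain R] [GCDMonoid R]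
    {M : Matrix (Fin 2) (Fin 2) R} {v : Fin 2 → R} (hv : v ≠ 0) (hMv : M *ᵥ v = v) :
    ∃ x y : R, IsCoprime x y ∧ M *ᵥ ![x, y] = ![x, y] := by
  set g := gcd (v 0) (v 1)
  have hg : g ≠ 0 := by
    rw [Ne, gcd_eq_zero_iff]
    rintro ⟨h0, h1⟩
    exact hv (funext fun i => by fin_cases i <;> assumption)
  have hvg : v = g • ![v 0 / g, v 1 / g] := by
    ext i
    fin_cases i
    · exact (EuclideanDomain.mul_div_cancel' hg (gcd_dvd_left _ _)).symm
    · exact (EuclideanDomain.mul_div_cancel' hg (gcd_dvd_right _ _)).symm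
  refine ⟨_, _, isCoprime_div_gcd_div_gcd_of_gcd_ne_zero hg, smul_right_injective _ hg ?_⟩
  rw [hvg, mulVec_smul] at hMv
  exact hMv

section

variable {R : Type*} [CommRing R]

theorem eq_triangular_of_mulVec_eq_self_of_det_eq_neg_one {N : Matrix (Fin 2) (Fin 2) R}
    (hN : N *ᵥ ![1, 0] = ![1, 0]) (hdet : N.det = -1) : N = !![1, N 0 1; 0, -1] := by
  have h0 : N 0 0 = 1 := by simpa using congrFun hN 0
  have h1 : N 1 0 = 0 := by simpa using congrFun hN 1
  rw [det_fin_two, h0, h1] at hdet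
  rw [eta_fin_two N, h0, h1, show N 1 1 = -1 by simpa using hdet]
  simp

theorem exists_isConj_triangular_of_isCoprime_mulVec_eq_self {M : Matrix (Fin 2) (Fin 2) R}
    (hdet : M.det = -1) {x y : R} (hxy : IsCoprime x y) (hMv : M *ᵥ ![x, y] = ![x, y]) :
    ∃ b, IsConj M !![1, b; 0, -1] := by
  obtain ⟨u, w, huw⟩ := hxy
  set P : Matrix (Fin 2) (Fin 2) R := !![x, -w; y, u]
  set C : Matrix (Fin 2) (Fin 2) R := !![u, w; -y, x]
  have hCP : C * P = 1 := by
    ext i j; fin_cases i <;> fin_cases j <;> simp [C, P] <;> grind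
  have hPC : P * C = 1 := mul_eq_one_comm.mp hCP
  set N := C * M * P
  have hN : N *ᵥ ![1, 0] = ![1, 0] := by
    have hP : P *ᵥ ![1, 0] = ![x, y] := by
      ext i; fin_cases i <;> simp [P]
    have hC : C *ᵥ ![x, y] = ![1, 0] := by
      ext i; fin_cases i <;> simp [C] <;> grind
    rw [← mulVec_mulVec, hP, ← mulVec_mulVec, hMv, hC]
  have hNdet : N.det = -1 := by
    rw [det_mul, det_mul, hdet, mul_neg_one, neg_mul, ← det_mul, hCP, det_one]
  refine ⟨N 0 1, ⟨C, P, hCP, hPC⟩, ?_⟩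
  rw [← eq_triangular_of_mulVec_eq_self_of_det_eq_neg_one hN hNdet]
  show C * M = C * M * P * C
  rw [Matrix.mul_assoc _ P, hPC, Matrix.mul_one]

theorem isConj_triangular_add_two_mul (b t : R) :
    IsConj (!![1, b; 0, -1] : Matrix (Fin 2) (Fin 2) R) !![1, b + 2 * t; 0, -1] := by
  refine ⟨⟨!![1, -t; 0, 1], !![1, t; 0, 1], ?_, ?_⟩, ?_⟩ <;>
    ext i j <;> fin_cases i <;> fin_cases j <;> simp; ring

theorem isConj_triangular_one_swap :
    IsConj (!![1, 1; 0, -1] : Matrix (Fin 2) (Fin 2) R) !![0, 1; 1, 0] := by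
  refine ⟨⟨!![1, 1; 1, 0], !![0, 1; 1, -1], ?_, ?_⟩, ?_⟩ <;>
    ext i j <;> fin_cases i <;> fin_cases j <;> simp

end

end Matrix

theorem gl2_det_neg_one_conjugate_general (M : Matrix (Fin 2) (Fin 2) ℤ)
    (hM : M * M = 1) (hdet : M.det = -1) :
    ∃ P : Matrix (Fin 2) (Fin 2) ℤ, IsUnit P.det ∧
      (P⁻¹ * M * P = !![1, 0; 0, -1] ∨ P⁻¹ * M * P = !![0, 1; 1, 0]) := by
  have hne : M ≠ -1 := by
    rintro rfl
    norm_num [det_neg] at hdet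
  obtain ⟨v, hv, hMv⟩ := exists_mulVec_eq_self_of_mul_self_eq_one hM hne
  obtain ⟨x, y, hxy, hfix⟩ := exists_isCoprime_mulVec_eq_self hv hMv
  obtain ⟨b, hb⟩ := exists_isConj_triangular_of_isCoprime_mulVec_eq_self hdet hxy hfix
  have hred := hb.trans (isConj_triangular_add_two_mul b (-(b / 2)))
  rw [show b + 2 * -(b / 2) = b % 2 by rw [Int.emod_def]; ring] at hred
  rcases Int.emod_two_eq_zero_or_one b with h | h <;> rw [h] at hred
  · obtain ⟨P, hP, hPM⟩ := exists_inv_mul_mul_eq_of_isConj hred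
    exact ⟨P, hP, Or.inl hPM⟩
  · obtain ⟨P, hP, hPM⟩ := exists_inv_mul_mul_eq_of_isConj (hred.trans isConj_triangular_one_swap)
    exact ⟨P, hP, Or.inr hPM⟩

/-- Every order-2 matrix in `GL₂(ℤ)` of determinant `-1` is conjugate in `GL₂(ℤ)` to
`S = [[1,0],[0,-1]]` or to `T = [[0,1],[1,0]]`. -/
theorem gl2_det_neg_one_conjugate (M : Matrix (Fin 2) (Fin 2) ℤ)
    (hM : M * M = 1) (hne : M ≠ 1) (hdet : M.det = -1) :
    ∃ P : Matrix (Fin 2) (Fin 2) ℤ, IsUnit P.det ∧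
      (P⁻¹ * M * P = !![1, 0; 0, -1] ∨ P⁻¹ * M * P = !![0, 1; 1, 0]) :=
  gl2_det_neg_one_conjugate_general M hM hdet
end

section
/- A matrix A ∈ GL₂(ℤ) with A² = I and det A = −1 is conjugate in GL₂(ℤ) to S = [[1,0],[0,−1]] if and only if both off-diagonal entries a₁₂ and a₂₁ are even. -/
/-!
If the off-diagonal entries of `A` are even then `A` has odd trace-free diagonal, so
`A = 2N - 1` with `N` integral of trace `1` and determinant `0`. Over `ℤ` such an `N` factors as
`vecMulVec v w` with `v ⬝ᵥ w = 1`, and `v` together with `(-w 1, w 0)` is a basis of `ℤ²` of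
eigenvectors of `A` for `1` and `-1`. Conversely `S ≡ 1 mod 2`, and being `≡ 1 mod 2` is
invariant under conjugation.
-/

open Matrix

namespace Matrix

theorem even_apply_of_map_intCast_zmod_two_eq_one {n : Type*} [DecidableEq n] {A : Matrix n n ℤ}
    (h : A.map (Int.cast : ℤ → ZMod 2) = 1) {i j : n} (hij : i ≠ j) : Even (A i j) := by
  simpa [hij, ZMod.intCast_eq_zero_iff_even] using congrFun (congrFun h i) j

variable {n R : Type*} [Fintype n] [DecidableEq n] [CommRing R]

theorem exists_isUnit_det_inv_mul_mul_eq_iff_isConj {A B : Matrix n n R} :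
    (∃ P : Matrix n n R, IsUnit P.det ∧ P⁻¹ * A * P = B) ↔ IsConj B A := by
  constructor
  · rintro ⟨P, hP, rfl⟩
    refine ⟨((isUnit_iff_isUnit_det P).mpr hP).unit, ?_⟩
    simp [SemiconjBy, ← mul_assoc, mul_nonsing_inv _ hP]
  · rintro ⟨u, hu⟩
    refine ⟨u, (isUnit_iff_isUnit_det _).mp u.isUnit, ?_⟩
    rw [mul_assoc, ← hu.eq, ← mul_assoc, ← coe_units_inv, u.inv_mul, one_mul]

theorem map_eq_one_of_isConj {S : Type*} [CommRing S] (f : R →+* S) {A B : Matrix n n R}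
    (h : IsConj B A) (hB : B.map f = 1) : A.map f = 1 := by
  simpa [hB] using (f.mapMatrix (m := n)).toMonoidHom.map_isConj h

theorem trace_eq_zero_of_mul_self_eq_one_of_det_eq_neg_one [IsReduced R]
    {A : Matrix (Fin 2) (Fin 2) R} (hA : A * A = 1) (hdet : A.det = -1) : A.trace = 0 := by
  have h00 := congrFun (congrFun hA 0) 0
  have h11 := congrFun (congrFun hA 1) 1
  simp only [mul_apply, Fin.sum_univ_two, one_apply_eq] at h00 h11
  rw [det_fin_two] at hdet
  refine IsReduced.eq_zero _ ⟨2, ?_⟩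
  rw [trace_fin_two]
  linear_combination h00 + h11 + 2 * hdet

theorem exists_eq_vecMulVec_of_det_eq_zero [IsDomain R] [IsBezout R] [GCDMonoid R]
    {N : Matrix (Fin 2) (Fin 2) R} (h : N.det = 0) : ∃ v w : Fin 2 → R, N = vecMulVec v w := by
  rw [det_fin_two] at h
  by_cases hg : gcd (N 0 0) (N 0 1) = 0
  · obtain ⟨h0, h1⟩ := (gcd_eq_zero_iff _ _).mp hg
    refine ⟨![0, 1], ![N 1 0, N 1 1], ?_⟩
    ext i j; fin_cases i <;> fin_cases j <;> simp [vecMulVec_apply, h0, h1]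
  obtain ⟨x, y, hx, hy, hxy⟩ := extract_gcd (N 0 0) (N 0 1)
  obtain ⟨α, β, hαβ⟩ := (gcd_isUnit_iff x y).mp hxy
  have hcross : N 1 1 * x = N 1 0 * y :=
    mul_left_cancel₀ hg (by linear_combination -N 1 1 * hx + N 1 0 * hy + h)
  have hz : N 1 0 = (α * N 1 0 + β * N 1 1) * x := by
    linear_combination -N 1 0 * hαβ - β * hcross
  have ht : N 1 1 = (α * N 1 0 + β * N 1 1) * y := by
    linear_combination -N 1 1 * hαβ + α * hcross
  refine ⟨![gcd (N 0 0) (N 0 1), α * N 1 0 + β * N 1 1], ![x, y], ?_⟩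
  ext i j; fin_cases i <;> fin_cases j <;> simp [vecMulVec_apply, ← hx, ← hy, ← hz, ← ht]

theorem isConj_two_smul_vecMulVec_sub_one {v w : Fin 2 → R} (h : v ⬝ᵥ w = 1) :
    IsConj !![1, 0; 0, -1] ((2 : R) • vecMulVec v w - 1) := by
  rw [dotProduct, Fin.sum_univ_two] at h
  have hdet : det !![v 0, -w 1; v 1, w 0] = 1 := by
    rw [det_fin_two_of]; linear_combination h
  have hP : IsUnit !![v 0, -w 1; v 1, w 0] := (isUnit_iff_isUnit_det _).mpr (hdet ▸ isUnit_one)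
  refine ⟨hP.unit, ?_⟩
  ext i j
  fin_cases i <;> fin_cases j <;> simp [mul_apply, Fin.sum_univ_two, vecMulVec_apply] <;> grind

theorem exists_eq_two_smul_vecMulVec_sub_one {A : Matrix (Fin 2) (Fin 2) ℤ} (hA : A * A = 1)
    (hdet : A.det = -1) (hb : Even (A 0 1)) (hc : Even (A 1 0)) :
    ∃ v w : Fin 2 → ℤ, v ⬝ᵥ w = 1 ∧ A = (2 : ℤ) • vecMulVec v w - 1 := by
  have htr := trace_eq_zero_of_mul_self_eq_one_of_det_eq_neg_one hA hdet
  rw [trace_fin_two] at htr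
  have h00 := congrFun (congrFun hA 0) 0
  simp only [mul_apply, Fin.sum_univ_two, one_apply_eq] at h00
  obtain ⟨b, hb⟩ := hb
  obtain ⟨c, hc⟩ := hc
  have hodd : Odd (A 0 0 * A 0 0) := ⟨-(b * A 1 0), by linear_combination h00 - A 1 0 * hb⟩
  obtain ⟨m, hm⟩ := (Int.odd_mul.mp hodd).1
  have hdetN : 4 * det !![m + 1, b; c, -m] = 0 := by
    rw [hm, hb, hc] at h00
    rw [det_fin_two_of]
    linear_combination -h00
  obtain ⟨v, w, hN⟩ := exists_eq_vecMulVec_of_det_eq_zero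
    ((mul_eq_zero.mp hdetN).resolve_left four_ne_zero)
  have h0 := congrFun (congrFun hN 0) 0
  have h1 := congrFun (congrFun hN 1) 1
  simp only [of_apply, cons_val', cons_val_zero, cons_val_one, vecMulVec_apply] at h0 h1
  refine ⟨v, w, ?_, ?_⟩
  · rw [dotProduct, Fin.sum_univ_two]
    linear_combination -h0 - h1
  · rw [← hN]
    ext i j; fin_cases i <;> fin_cases j <;> simp <;> omega

end Matrix

/-- A matrix `A ∈ GL₂(ℤ)` with `A² = I` and `det A = -1` is conjugate in `GL₂(ℤ)` to
`S = [[1,0],[0,-1]]` if and only if both off-diagonal entries are even. -/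
theorem gl2_conjugate_to_S_iff (A : Matrix (Fin 2) (Fin 2) ℤ)
    (hA : A * A = 1) (hdet : A.det = -1) :
    (∃ P : Matrix (Fin 2) (Fin 2) ℤ, IsUnit P.det ∧ P⁻¹ * A * P = !![1, 0; 0, -1]) ↔
      (Even (A 0 1) ∧ Even (A 1 0)) := by
  rw [exists_isUnit_det_inv_mul_mul_eq_iff_isConj]
  constructor
  · intro h
    have hS : (!![1, 0; 0, -1] : Matrix (Fin 2) (Fin 2) ℤ).map (Int.cast : ℤ → ZMod 2) = 1 := by
      ext i j; fin_cases i <;> fin_cases j <;> rfl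
    have hA2 := map_eq_one_of_isConj (Int.castRingHom (ZMod 2)) h hS
    exact ⟨even_apply_of_map_intCast_zmod_two_eq_one hA2 zero_ne_one,
      even_apply_of_map_intCast_zmod_two_eq_one hA2 one_ne_zero⟩
  · rintro ⟨hb, hc⟩
    obtain ⟨v, w, hvw, rfl⟩ := exists_eq_two_smul_vecMulVec_sub_one hA hdet hb hc
    exact isConj_two_smul_vecMulVec_sub_one hvw
end

section
/- Suppose a² + bc = 1 with a, b, c integers, a odd, and b, c even. Write a = 2n+1, b = 2b', c = 2c'. Then there exist integers x, y, z, w with xw − yz = 1, wx = n+1, yz = n, wy = b', and xz = −c'; consequently [[x,y],[z,w]]⁻¹ · [[1,0],[0,−1]] · [[x,y],[z,w]] = [[a,b],[c,−a]]. -/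
open Matrix

/-! Since `a² + bc = 1` reads `(n + 1) · n = b' · (-c')`, the four-number theorem factors the four
numbers as `n + 1 = wx`, `n = yz`, `b' = wy`, `-c' = xz`; then `xw - yz = 1`, and conjugating
`diag(1, -1)` by any matrix of determinant one gives `[[xw + yz, 2wy], [-2xz, -(xw + yz)]]`. -/

theorem exists_mul_eq_of_mul_eq_mul {α : Type*} [CommMonoidWithZero α] [IsCancelMulZero α]
    [DecompositionMonoid α] {p q r s : α} (h : p * q = r * s) :
    ∃ w x y z, p = w * x ∧ q = y * z ∧ r = w * y ∧ s = x * z := by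
  by_cases hp : p = 0
  · subst hp
    rcases mul_eq_zero.mp (zero_mul q ▸ h).symm with rfl | rfl
    · exact ⟨0, s, q, 1, by simp, by simp, by simp, by simp⟩
    · exact ⟨r, 0, 1, q, by simp, by simp, by simp, by simp⟩
  · obtain ⟨w, x, ⟨y, rfl⟩, ⟨z, rfl⟩, rfl⟩ := exists_dvd_and_dvd_of_dvd_mul (Dvd.intro q h)
    refine ⟨w, x, y, z, rfl, mul_left_cancel₀ hp ?_, rfl, rfl⟩
    rw [h, mul_mul_mul_comm]

theorem inv_mul_diag_one_neg_one_mul_of_det_eq_one {R : Type*} [CommRing R] {x y z w : R}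
    (hdet : x * w - y * z = 1) :
    (!![x, y; z, w] : Matrix (Fin 2) (Fin 2) R)⁻¹ * !![1, 0; 0, -1] * !![x, y; z, w] =
      !![x * w + y * z, 2 * (w * y); -(2 * (x * z)), -(x * w + y * z)] := by
  rw [inv_def, det_fin_two_of, hdet, adjugate_fin_two_of, Ring.inverse_one, one_smul]
  ext i j
  fin_cases i <;> fin_cases j <;> simp [mul_apply, Fin.sum_univ_two] <;> ring

/-- If `a² + bc = 1` with `a = 2n+1` odd and `b = 2b'`, `c = 2c'` even, then there are integers
`x, y, z, w` with `xw - yz = 1`, `wx = n+1`, `yz = n`, `wy = b'`, `xz = -c'`, and consequently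
`[[x,y],[z,w]]⁻¹ · [[1,0],[0,-1]] · [[x,y],[z,w]] = [[a,b],[c,-a]]`. -/
theorem gl2_factorization_conjugation (a b c n b' c' : ℤ)
    (h : a ^ 2 + b * c = 1) (ha : a = 2 * n + 1) (hb : b = 2 * b') (hc : c = 2 * c') :
    ∃ x y z w : ℤ, x * w - y * z = 1 ∧ w * x = n + 1 ∧ y * z = n ∧
      w * y = b' ∧ x * z = -c' ∧
      (!![x, y; z, w] : Matrix (Fin 2) (Fin 2) ℤ)⁻¹ * !![1, 0; 0, -1] * !![x, y; z, w] =
        !![a, b; c, -a] := by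
  subst ha hb hc
  have hprod : (n + 1) * n = b' * -c' :=
    mul_left_cancel₀ (four_ne_zero (α := ℤ)) (by linear_combination h)
  obtain ⟨w, x, y, z, hwx, hyz, hwy, hxz⟩ := exists_mul_eq_of_mul_eq_mul hprod
  have hdet : x * w - y * z = 1 := by linear_combination hyz - hwx
  refine ⟨x, y, z, w, hdet, hwx.symm, hyz.symm, hwy.symm, hxz.symm, ?_⟩
  rw [inv_mul_diag_one_neg_one_mul_of_det_eq_one hdet, ← hwy, ← hxz]
  have htrace : x * w + y * z = 2 * n + 1 := by linear_combination -hwx - hyz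
  simp only [htrace, mul_neg, neg_neg]
end

section
/- Define A(r) to be the number of tuples (F, C₊, C₋) of nonnegative integers satisfying F + 2(C₊ + C₋) ≤ r and F ≡ C₋ ≡ r (mod 2). Then A(r) = (1/96)(r+3)(r+4)(r+8) if r ≡ 0 (mod 4), A(r) = (1/96)(r+2)(r+6)(r+7) if r ≡ 2 (mod 4), A(r) = (1/96)(r−1)(r+3)(r+4) if r ≡ 1 (mod 4), and A(r) = (1/96)r(r+1)(r+5) if r ≡ 3 (mod 4). -/
/-!
With `ε = r % 2` and `r = 2n + 3ε`, the substitution `F = 2x + ε`, `C₋ = 2y + ε`, `C₊ = c`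
identifies the triples with the lattice points `x + c + 2y ≤ n` (for `r = 1` there are none).
Splitting off the slice `y = 0`, a triangle with `(n + 3)(n + 4)/2` points, gives
`B(n + 2) = B(n) + (n + 3)(n + 4)/2` for their number `B(n)`, hence
`24 B(n) + 3 (n % 2) = (n + 2)(n + 4)(2n + 3)`; the four cases are this cubic written in `r`.
-/

open Finset

def triangle (m : ℕ) : Finset (ℕ × ℕ) := {p ∈ Iic (m, m) | p.1 + p.2 ≤ m}

@[simp]
lemma mem_triangle {m : ℕ} {p : ℕ × ℕ} : p ∈ triangle m ↔ p.1 + p.2 ≤ m := by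
  simp only [triangle, mem_filter, mem_Iic, Prod.le_def]
  omega

lemma card_triangle_succ (m : ℕ) : #(triangle (m + 1)) = #(triangle m) + (m + 2) := by
  rw [← card_filter_add_card_filter_not (s := triangle (m + 1)) (fun p => p.1 + p.2 ≤ m),
    ← Nat.card_antidiagonal (m + 1)]
  congr 2 <;> ext p <;>
    simp only [mem_filter, mem_triangle, HasAntidiagonal.mem_antidiagonal] <;> omega

lemma two_mul_card_triangle (m : ℕ) : 2 * #(triangle m) = (m + 1) * (m + 2) := by
  induction m with
  | zero => rfl
  | succ m ih => rw [card_triangle_succ, mul_add, ih]; ring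

def weightedSimplex (n : ℕ) : Finset (ℕ × ℕ × ℕ) :=
  {t ∈ Iic (n, n, n) | t.1 + t.2.1 + 2 * t.2.2 ≤ n}

@[simp]
lemma mem_weightedSimplex {n : ℕ} {t : ℕ × ℕ × ℕ} :
    t ∈ weightedSimplex n ↔ t.1 + t.2.1 + 2 * t.2.2 ≤ n := by
  simp only [weightedSimplex, mem_filter, mem_Iic, Prod.le_def]
  omega

lemma card_weightedSimplex_add_two (n : ℕ) :
    #(weightedSimplex (n + 2)) = #(weightedSimplex n) + #(triangle (n + 2)) := by
  rw [← card_filter_add_card_filter_not (s := weightedSimplex (n + 2)) (fun t => t.2.2 ≠ 0)]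
  congr 1
  · refine card_nbij' (fun t => (t.1, t.2.1, t.2.2 - 1)) (fun t => (t.1, t.2.1, t.2.2 + 1))
      ?_ ?_ ?_ ?_ <;> rintro ⟨x, c, y⟩ <;> simp <;> omega
  · refine card_nbij' (fun t => (t.1, t.2.1)) (fun p => (p.1, p.2, 0))
      ?_ ?_ ?_ ?_ <;> rintro ⟨x, c, y⟩ <;> simp <;> omega

lemma card_weightedSimplex (n : ℕ) :
    24 * #(weightedSimplex n) + 3 * (n % 2) = (n + 2) * (n + 4) * (2 * n + 3) := by
  induction n using Nat.twoStepInduction with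
  | zero => rfl
  | one => rfl
  | more n ih _ =>
    have := two_mul_card_triangle (n + 2)
    rw [card_weightedSimplex_add_two, Nat.add_mod_right]
    linarith

def parityTriples (r : ℕ) : Set (ℕ × ℕ × ℕ) :=
  {t | t.1 + 2 * (t.2.1 + t.2.2) ≤ r ∧ t.1 % 2 = r % 2 ∧ t.2.2 % 2 = r % 2}

lemma ncard_parityTriples {r n : ℕ} (hr : 2 * n + 3 * (r % 2) = r) :
    (parityTriples r).ncard = #(weightedSimplex n) := by
  rw [← Set.ncard_coe_finset]
  refine Set.ncard_congr (fun t _ => ((t.1 - r % 2) / 2, t.2.1, (t.2.2 - r % 2) / 2)) ?_ ?_ ?_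
  · rintro ⟨F, C, D⟩ h
    simp only [parityTriples, Set.mem_ofPred_eq, mem_coe, mem_weightedSimplex] at h ⊢
    omega
  · rintro ⟨F, C, D⟩ ⟨F', C', D'⟩ h h' e
    simp only [parityTriples, Set.mem_ofPred_eq, Prod.mk.injEq] at h h' e ⊢
    omega
  · rintro ⟨x, c, y⟩ h
    refine ⟨(2 * x + r % 2, c, 2 * y + r % 2), ?_, ?_⟩ <;>
      simp only [parityTriples, Set.mem_ofPred_eq, mem_coe, mem_weightedSimplex, Prod.mk.injEq,
        true_and] at h ⊢ <;> omega

lemma parityTriples_one : parityTriples 1 = ∅ := by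
  ext ⟨F, C, D⟩
  simp only [parityTriples, Set.mem_ofPred_eq, Set.mem_empty_iff_false, iff_false, not_and]
  omega

lemma ncard_parityTriples_formula {r n : ℕ} (hr : 2 * n + 3 * (r % 2) = r) :
    96 * (parityTriples r).ncard + 12 * (n % 2) = (2 * n + 3) * (2 * n + 4) * (2 * n + 8) := by
  have := card_weightedSimplex n
  rw [ncard_parityTriples hr]
  linarith

/-- Closed formulas for `A(r)`, the number of triples `(F, C₊, C₋)` of nonnegative integers
with `F + 2(C₊ + C₋) ≤ r` and `F ≡ C₋ ≡ r (mod 2)`. -/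
theorem count_A_formula (r : ℕ) (A : ℕ)
    (hA : A = Set.ncard {t : ℕ × ℕ × ℕ |
      t.1 + 2 * (t.2.1 + t.2.2) ≤ r ∧ t.1 % 2 = r % 2 ∧ t.2.2 % 2 = r % 2}) :
    (r % 4 = 0 → 96 * A = (r + 3) * (r + 4) * (r + 8)) ∧
    (r % 4 = 2 → 96 * A = (r + 2) * (r + 6) * (r + 7)) ∧
    (r % 4 = 1 → 96 * A = (r - 1) * (r + 3) * (r + 4)) ∧
    (r % 4 = 3 → 96 * A = r * (r + 1) * (r + 5)) := by
  change A = (parityTriples r).ncard at hA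
  subst hA
  refine ⟨fun h => ?_, fun h => ?_, fun h => ?_, fun h => ?_⟩
  · obtain ⟨q, rfl⟩ : ∃ q, r = 4 * q := ⟨r / 4, by omega⟩
    have := ncard_parityTriples_formula (r := 4 * q) (n := 2 * q) (by omega)
    rw [Nat.mul_mod_right] at this
    linarith
  · obtain ⟨q, rfl⟩ : ∃ q, r = 4 * q + 2 := ⟨r / 4, by omega⟩
    have := ncard_parityTriples_formula (r := 4 * q + 2) (n := 2 * q + 1) (by omega)
    rw [Nat.mul_add_mod] at this
    linarith
  · obtain ⟨_ | q, rfl⟩ : ∃ q, r = 4 * q + 1 := ⟨r / 4, by omega⟩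
    · simp [parityTriples_one]
    have := ncard_parityTriples_formula (r := 4 * (q + 1) + 1) (n := 2 * q + 1) (by omega)
    rw [Nat.mul_add_mod] at this
    rw [Nat.add_sub_cancel]
    linarith
  · obtain ⟨q, rfl⟩ : ∃ q, r = 4 * q + 3 := ⟨r / 4, by omega⟩
    have := ncard_parityTriples_formula (r := 4 * q + 3) (n := 2 * q) (by omega)
    rw [Nat.mul_mod_right] at this
    linarith
end

section
/- Define B(r) to be the number of tuples (F, C₊, C₋) of nonnegative integers satisfying F ≡ C₋ ≡ r (mod 2) and F + 2(C₊ + C₋) ≡ r + 2 (mod 4) and F + 2(C₊ + C₋) ≤ r + 2. Then B(r) = (1/192)(r+4)(r+8)(r+12) if r ≡ 0 (mod 4), B(r) = (1/192)(r+6)(r+8)(r+10) if r ≡ 2 (mod 4), B(r) = (1/192)(r+3)(r+5)(r+7) if r ≡ 1 (mod 4), and B(r) = (1/192)(r+1)(r+5)(r+9) if r ≡ 3 (mod 4). -/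
/-!
Write `ε = r % 2`. The conditions force `F = 2a + ε` and `C₋ = 2c + ε`, and then
`F + 2C₊ + 2C₋ = 2(a + C₊ + 2c) + 3ε`; the congruence mod 4 says that the slack
`r + 2 - (F + 2C₊ + 2C₋)` is `4d`. So `B(r) = U(M)`, the number of solutions of `a + b + 2c + 2d = M`
with `2M + 3ε = r + 2`. Splitting off the solutions with last variable `0` gives the recurrences
`U(M + 2) = U(M) + V(M + 2)` and `V(M + 2) = V(M) + (M + 3)`, where `V(M)` counts the solutions
of `a + b + 2c = M`; they solve to one cubic for each parity of `M`.
-/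

open Set

def addTwoMul {α : Type*} (f : α → ℕ) (p : α × ℕ) : ℕ := f p.1 + 2 * p.2

section
variable {α : Type*} {f : α → ℕ}

theorem finite_preimage_addTwoMul (hf : ∀ n, (f ⁻¹' {n}).Finite) (n : ℕ) :
    (addTwoMul f ⁻¹' {n}).Finite := by
  refine ((finite_Iic n).biUnion fun k _ => (hf k).prod (finite_Iic n)).subset ?_
  rintro ⟨x, d⟩ h
  simp only [mem_preimage, mem_singleton_iff, addTwoMul] at h
  simp only [mem_iUnion, mem_prod, mem_preimage, mem_singleton_iff, mem_Iic]
  exact ⟨f x, by omega, rfl, by omega⟩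

theorem ncard_preimage_addTwoMul_of_lt_two {n : ℕ} (hn : n < 2) :
    (addTwoMul f ⁻¹' {n}).ncard = (f ⁻¹' {n}).ncard := by
  have : addTwoMul f ⁻¹' {n} = (·, 0) '' (f ⁻¹' {n}) := by
    ext ⟨x, _ | d⟩
    · simp [addTwoMul]
    · simp [addTwoMul]
      omega
  rw [this, ncard_image_of_injective _ (Prod.mk_left_injective 0)]

theorem ncard_preimage_addTwoMul_add_two (hf : ∀ n, (f ⁻¹' {n}).Finite) (n : ℕ) :
    (addTwoMul f ⁻¹' {n + 2}).ncard =
      (addTwoMul f ⁻¹' {n}).ncard + (f ⁻¹' {n + 2}).ncard := by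
  have hsplit : addTwoMul f ⁻¹' {n + 2} =
      Prod.map id Nat.succ '' (addTwoMul f ⁻¹' {n}) ∪ (·, 0) '' (f ⁻¹' {n + 2}) := by
    ext ⟨x, _ | d⟩
    · simp [addTwoMul]
    · simp [addTwoMul]
      omega
  have hinj : Function.Injective (Prod.map id Nat.succ : α × ℕ → α × ℕ) :=
    Function.injective_id.prodMap Nat.succ_injective
  rw [hsplit, ncard_union_eq ?_ ((finite_preimage_addTwoMul hf n).image _) ((hf _).image _),
    ncard_image_of_injective _ hinj, ncard_image_of_injective _ (Prod.mk_left_injective 0)]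
  rw [disjoint_iff_forall_ne]
  rintro _ ⟨⟨_, _⟩, -, rfl⟩ _ ⟨_, -, rfl⟩
  simp
end

def pairSum (p : ℕ × ℕ) : ℕ := p.1 + p.2

theorem preimage_pairSum (n : ℕ) : pairSum ⁻¹' {n} = ↑(Finset.HasAntidiagonal.antidiagonal n) := by
  ext; simp [pairSum]

theorem finite_preimage_pairSum (n : ℕ) : (pairSum ⁻¹' {n}).Finite := by
  rw [preimage_pairSum]
  exact Finset.finite_toSet _

theorem ncard_preimage_pairSum (n : ℕ) : (pairSum ⁻¹' {n}).ncard = n + 1 := by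
  rw [preimage_pairSum, ncard_coe_finset, Finset.Nat.card_antidiagonal]

-- The numbers of solutions of `a + b + 2c = n` and of `a + b + 2c + 2d = n`.
noncomputable def tripleCount (n : ℕ) : ℕ := (addTwoMul pairSum ⁻¹' {n}).ncard

noncomputable def quadCount (n : ℕ) : ℕ := (addTwoMul (addTwoMul pairSum) ⁻¹' {n}).ncard

theorem tripleCount_add_two (n : ℕ) : tripleCount (n + 2) = tripleCount n + (n + 3) := by
  rw [tripleCount, ncard_preimage_addTwoMul_add_two finite_preimage_pairSum, ncard_preimage_pairSum]
  rfl

theorem quadCount_add_two (n : ℕ) : quadCount (n + 2) = quadCount n + tripleCount (n + 2) :=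
  ncard_preimage_addTwoMul_add_two (finite_preimage_addTwoMul finite_preimage_pairSum) n

theorem tripleCount_of_lt_two {n : ℕ} (hn : n < 2) : tripleCount n = n + 1 := by
  rw [tripleCount, ncard_preimage_addTwoMul_of_lt_two hn, ncard_preimage_pairSum]

theorem quadCount_of_lt_two {n : ℕ} (hn : n < 2) : quadCount n = n + 1 := by
  rw [quadCount, ncard_preimage_addTwoMul_of_lt_two hn]
  exact tripleCount_of_lt_two hn

theorem tripleCount_two_mul (k : ℕ) : tripleCount (2 * k) = (k + 1) ^ 2 := by
  induction k with
  | zero => exact tripleCount_of_lt_two (by norm_num)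
  | succ k ih => rw [mul_add, tripleCount_add_two, ih]; ring

theorem tripleCount_two_mul_add_one (k : ℕ) : tripleCount (2 * k + 1) = (k + 1) * (k + 2) := by
  induction k with
  | zero => exact tripleCount_of_lt_two (by norm_num)
  | succ k ih => rw [show 2 * (k + 1) + 1 = 2 * k + 1 + 2 by ring, tripleCount_add_two, ih]; ring

theorem quadCount_two_mul (k : ℕ) : 6 * quadCount (2 * k) = (k + 1) * (k + 2) * (2 * k + 3) := by
  induction k with
  | zero => rw [quadCount_of_lt_two (by norm_num)]
  | succ k ih =>
    rw [mul_add 2 k 1, quadCount_add_two, ← mul_add_one 2 k, tripleCount_two_mul, mul_add, ih]; ring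

theorem quadCount_two_mul_add_one (k : ℕ) :
    3 * quadCount (2 * k + 1) = (k + 1) * (k + 2) * (k + 3) := by
  induction k with
  | zero => rw [quadCount_of_lt_two (by norm_num)]
  | succ k ih =>
    rw [show 2 * (k + 1) + 1 = 2 * k + 1 + 2 by ring, quadCount_add_two,
      show 2 * k + 1 + 2 = 2 * (k + 1) + 1 by ring, tripleCount_two_mul_add_one, mul_add, ih]
    ring

def bTriples (r : ℕ) : Set (ℕ × ℕ × ℕ) :=
  {t | t.1 % 2 = r % 2 ∧ t.2.2 % 2 = r % 2 ∧
    (t.1 + 2 * (t.2.1 + t.2.2)) % 4 = (r + 2) % 4 ∧ t.1 + 2 * (t.2.1 + t.2.2) ≤ r + 2}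

theorem ncard_bTriples {r M : ℕ} (hM : 2 * M + 3 * (r % 2) = r + 2) :
    (bTriples r).ncard = quadCount M := by
  symm
  apply ncard_congr (fun q _ => (2 * q.1.1.1 + r % 2, q.1.1.2, 2 * q.1.2 + r % 2))
  · rintro ⟨⟨⟨a, b⟩, c⟩, d⟩ h
    simp only [addTwoMul, pairSum, mem_preimage, mem_singleton_iff] at h
    simp only [bTriples, mem_ofPred_eq]
    omega
  · rintro ⟨⟨⟨a, b⟩, c⟩, d⟩ ⟨⟨⟨a', b'⟩, c'⟩, d'⟩ h h' heq
    simp only [addTwoMul, pairSum, mem_preimage, mem_singleton_iff] at h h'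
    simp only [Prod.mk.injEq] at heq ⊢
    omega
  · rintro ⟨F, P, C⟩ h
    simp only [bTriples, mem_ofPred_eq] at h
    refine ⟨(((F / 2, P), C / 2), (M - F / 2 - P - 2 * (C / 2)) / 2), ?_, ?_⟩
    · simp only [addTwoMul, pairSum, mem_preimage, mem_singleton_iff]
      omega
    · simp only [Prod.mk.injEq, true_and]
      omega

/-- Closed formulas for `B(r)`, the number of triples `(F, C₊, C₋)` of nonnegative integers
with `F ≡ C₋ ≡ r (mod 2)`, `F + 2(C₊ + C₋) ≡ r + 2 (mod 4)`, and `F + 2(C₊ + C₋) ≤ r + 2`. -/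
theorem count_B_formula (r : ℕ) (B : ℕ)
    (hB : B = Set.ncard {t : ℕ × ℕ × ℕ |
      t.1 % 2 = r % 2 ∧ t.2.2 % 2 = r % 2 ∧
      (t.1 + 2 * (t.2.1 + t.2.2)) % 4 = (r + 2) % 4 ∧
      t.1 + 2 * (t.2.1 + t.2.2) ≤ r + 2}) :
    (r % 4 = 0 → 192 * B = (r + 4) * (r + 8) * (r + 12)) ∧
    (r % 4 = 2 → 192 * B = (r + 6) * (r + 8) * (r + 10)) ∧
    (r % 4 = 1 → 192 * B = (r + 3) * (r + 5) * (r + 7)) ∧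
    (r % 4 = 3 → 192 * B = (r + 1) * (r + 5) * (r + 9)) := by
  change B = (bTriples r).ncard at hB
  refine ⟨fun hr => ?_, fun hr => ?_, fun hr => ?_, fun hr => ?_⟩
  · obtain ⟨m, rfl⟩ : ∃ m, r = 4 * m := ⟨r / 4, by omega⟩
    rw [hB, ncard_bTriples (M := 2 * m + 1) (by omega)]
    linear_combination 64 * quadCount_two_mul_add_one m
  · obtain ⟨m, rfl⟩ : ∃ m, r = 4 * m + 2 := ⟨r / 4, by omega⟩
    rw [hB, ncard_bTriples (M := 2 * (m + 1)) (by omega)]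
    linear_combination 32 * quadCount_two_mul (m + 1)
  · obtain ⟨m, rfl⟩ : ∃ m, r = 4 * m + 1 := ⟨r / 4, by omega⟩
    rw [hB, ncard_bTriples (M := 2 * m) (by omega)]
    linear_combination 32 * quadCount_two_mul m
  · obtain ⟨m, rfl⟩ : ∃ m, r = 4 * m + 3 := ⟨r / 4, by omega⟩
    rw [hB, ncard_bTriples (M := 2 * m + 1) (by omega)]
    linear_combination 64 * quadCount_two_mul_add_one m
end

section
/- With A(r) and B(r) as defined (counting the respective sets of lattice triples), one has A(r) + B(r) = (1/64)(r+4)(r+6)(r+8) if r ≡ 0 (mod 4); (1/64)(r+3)³ if r ≡ 1 (mod 4); (1/64)(r+6)³ if r ≡ 2 (mod 4); and (1/64)(r+1)(r+3)(r+5) if r ≡ 3 (mod 4). -/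
open Finset

namespace CountABProof


def tri : ℕ → ℕ
  | 0 => 0
  | n + 1 => tri n + (n + 1)

lemma tri_two (n : ℕ) : 2 * tri n = n * (n + 1) := by
  induction n with
  | zero => rfl
  | succ n ih => rw [tri]; ring_nf; ring_nf at ih; omega

def G (m p : ℕ) : ℕ := ((m + 2 - p) / 2) * ((m + 3 - p) / 2)

def G2 (m p : ℕ) : ℕ := tri ((m + 2 - p) / 2)

def RA (k p : ℕ) : ℕ := ∑ m ∈ range (k + 1), G m p

def RB (k p : ℕ) : ℕ := ∑ m ∈ range (k + 1), G2 m p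

lemma RA_succ (k p : ℕ) : RA (k + 1) p = RA k p + G (k + 1) p :=
  Finset.sum_range_succ _ _

lemma RB_succ (k p : ℕ) : RB (k + 1) p = RB k p + G2 (k + 1) p :=
  Finset.sum_range_succ _ _

/-- L1 -/
lemma sum_ite_le (n K : ℕ) (h : K < n) :
    (∑ a ∈ range n, if a ≤ K then 1 else 0) = K + 1 := by
  induction n with
  | zero => omega
  | succ n ih =>
    rw [Finset.sum_range_succ]
    rcases Nat.lt_or_ge K n with h' | h'
    · rw [ih h', if_neg (by omega)]
    · have hK : K = n := by omega
      subst hK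
      rw [if_pos le_rfl]
      have : (∑ a ∈ range K, if a ≤ K then 1 else 0) = ∑ _a ∈ range K, 1 := by
        apply Finset.sum_congr rfl
        intro a ha
        rw [if_pos (le_of_lt (Finset.mem_range.mp ha))]
      rw [this, Finset.sum_const, smul_eq_mul, mul_one, Finset.card_range]

/-- L2 -/
lemma sum_ite_le_parity (n : ℕ) : ∀ K p : ℕ, p < 2 → K < n →
    (∑ a ∈ range n, if a ≤ K ∧ a % 2 = p then 1 else 0) = (K + 2 - p) / 2 := by
  induction n with
  | zero => omega
  | succ n ih =>
    intro K p hp hK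
    rw [Finset.sum_range_succ]
    rcases Nat.lt_or_ge K n with h' | h'
    · rw [ih K p hp h', if_neg (by omega)]
      omega
    · have hKn : K = n := by omega
      subst hKn
      rcases Nat.eq_zero_or_pos K with h0 | h0
      · subst h0
        simp only [Finset.range_zero, Finset.sum_empty, zero_add]
        split <;> omega
      · have step : (∑ a ∈ range K, if a ≤ K ∧ a % 2 = p then 1 else 0)
            = ∑ a ∈ range K, if a ≤ K - 1 ∧ a % 2 = p then 1 else 0 := by
          apply Finset.sum_congr rfl
          intro a ha
          have := Finset.mem_range.mp ha
          apply if_congr _ rfl rfl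
          omega
        rw [step, ih (K - 1) p hp (by omega)]
        split <;> omega

/-- L3 -/
lemma sum_weighted_parity (n : ℕ) : ∀ m p : ℕ, p < 2 → m < n →
    (∑ b ∈ range n, if b ≤ m ∧ b % 2 = p then m - b + 1 else 0) = G m p := by
  intro m p hp
  induction m with
  | zero =>
    intro hm
    have step : (∑ b ∈ range n, if b ≤ 0 ∧ b % 2 = p then 0 - b + 1 else 0)
        = ∑ b ∈ range n, if b ≤ 0 ∧ b % 2 = p then 1 else 0 := by
      apply Finset.sum_congr rfl
      intro b _
      split <;> omega
    rw [step, sum_ite_le_parity n 0 p hp hm]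
    unfold G
    rcases (by omega : p = 0 ∨ p = 1) with rfl | rfl <;> rfl
  | succ m ih =>
    intro hm
    have step : (∑ b ∈ range n, if b ≤ m + 1 ∧ b % 2 = p then m + 1 - b + 1 else 0)
        = ∑ b ∈ range n, ((if b ≤ m ∧ b % 2 = p then m - b + 1 else 0)
            + (if b ≤ m + 1 ∧ b % 2 = p then 1 else 0)) := by
      apply Finset.sum_congr rfl
      intro b _
      split_ifs <;> omega
    rw [step, Finset.sum_add_distrib, ih (by omega), sum_ite_le_parity n (m + 1) p hp hm]
    unfold G
    have h1 : (m + 1 + 3 - p) / 2 = (m + 2 - p) / 2 + 1 := by omega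
    have h2 : (m + 1 + 2 - p) / 2 = (m + 3 - p) / 2 := by omega
    rw [h1, h2]
    ring

/-- L4 -/
lemma sum_half_parity (n : ℕ) : ∀ m p : ℕ, p < 2 → m < n →
    (∑ b ∈ range n, if b ≤ m ∧ b % 2 = p then (m - b) / 2 + 1 else 0) = G2 m p := by
  intro m p hp
  induction m with
  | zero =>
    intro hm
    have step : (∑ b ∈ range n, if b ≤ 0 ∧ b % 2 = p then (0 - b) / 2 + 1 else 0)
        = ∑ b ∈ range n, if b ≤ 0 ∧ b % 2 = p then 1 else 0 := by
      apply Finset.sum_congr rfl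
      intro b _
      split <;> omega
    rw [step, sum_ite_le_parity n 0 p hp hm]
    unfold G2
    rcases (by omega : p = 0 ∨ p = 1) with rfl | rfl <;> rfl
  | succ m ih =>
    intro hm
    have step : (∑ b ∈ range n, if b ≤ m + 1 ∧ b % 2 = p then (m + 1 - b) / 2 + 1 else 0)
        = ∑ b ∈ range n, ((if b ≤ m ∧ b % 2 = p then (m - b) / 2 + 1 else 0)
            + (if b ≤ m + 1 ∧ b % 2 = p ∧ (m + 1) % 2 = p then 1 else 0)) := by
      apply Finset.sum_congr rfl
      intro b _
      split_ifs <;> omega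
    rw [step, Finset.sum_add_distrib, ih (by omega)]
    by_cases hmp : (m + 1) % 2 = p
    · have e1 : (∑ b ∈ range n, if b ≤ m + 1 ∧ b % 2 = p ∧ (m + 1) % 2 = p then 1 else 0)
          = ∑ b ∈ range n, if b ≤ m + 1 ∧ b % 2 = p then 1 else 0 := by
        apply Finset.sum_congr rfl
        intro b _
        apply if_congr _ rfl rfl
        tauto
      rw [e1, sum_ite_le_parity n (m + 1) p hp hm]
      unfold G2
      obtain ⟨k, hk⟩ : ∃ k, m + 2 - p = 2 * k + 1 := ⟨(m + 2 - p) / 2, by omega⟩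
      have h1 : (m + 1 + 2 - p) / 2 = k + 1 := by omega
      have h2 : (m + 2 - p) / 2 = k := by omega
      rw [h1, h2, tri]
    · have e1 : (∑ b ∈ range n, if b ≤ m + 1 ∧ b % 2 = p ∧ (m + 1) % 2 = p then 1 else 0) = 0 := by
        apply Finset.sum_eq_zero
        intro b _
        rw [if_neg]
        tauto
      rw [e1]
      unfold G2
      have : (m + 1 + 2 - p) / 2 = (m + 2 - p) / 2 := by omega
      rw [this]
      omega


lemma A_count (r : ℕ) :
    Set.ncard {t : ℕ × ℕ × ℕ |
      t.1 + 2 * (t.2.1 + t.2.2) ≤ r ∧ t.1 % 2 = r % 2 ∧ t.2.2 % 2 = r % 2}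
      = ∑ F ∈ range (r + 1), if F % 2 = r % 2 then G ((r - F) / 2) (r % 2) else 0 := by
  have hset : {t : ℕ × ℕ × ℕ |
      t.1 + 2 * (t.2.1 + t.2.2) ≤ r ∧ t.1 % 2 = r % 2 ∧ t.2.2 % 2 = r % 2}
      = ↑(((range (r + 1)) ×ˢ (range (r + 1)) ×ˢ (range (r + 1))).filter
        (fun t => t.1 + 2 * (t.2.1 + t.2.2) ≤ r ∧ t.1 % 2 = r % 2 ∧ t.2.2 % 2 = r % 2)) := by
    ext ⟨F, a, b⟩
    simp only [Set.mem_setOf_eq, Finset.coe_filter, Finset.mem_product, Finset.mem_range]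
    omega
  rw [hset, Set.ncard_coe_finset, Finset.card_filter, Finset.sum_product]
  apply Finset.sum_congr rfl
  intro F hF
  have hFr : F ≤ r := by have := Finset.mem_range.mp hF; omega
  rw [Finset.sum_product, Finset.sum_comm]
  dsimp only
  by_cases hF2 : F % 2 = r % 2
  · rw [if_pos hF2]
    rw [← sum_weighted_parity (r + 1) ((r - F) / 2) (r % 2) (by omega) (by omega)]
    apply Finset.sum_congr rfl
    intro b hb
    by_cases hb2 : b ≤ (r - F) / 2 ∧ b % 2 = r % 2
    · rw [if_pos hb2]
      have key : ∀ a : ℕ, (F + 2 * (a + b) ≤ r ∧ F % 2 = r % 2 ∧ b % 2 = r % 2)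
          ↔ a ≤ (r - F) / 2 - b := by intro a; omega
      have : (∑ a ∈ range (r + 1),
          if F + 2 * (a + b) ≤ r ∧ F % 2 = r % 2 ∧ b % 2 = r % 2 then 1 else 0)
          = ∑ a ∈ range (r + 1), if a ≤ (r - F) / 2 - b then 1 else 0 :=
        Finset.sum_congr rfl (fun a _ => if_congr (key a) rfl rfl)
      rw [this, sum_ite_le (r + 1) _ (by omega)]
    · rw [if_neg hb2]
      apply Finset.sum_eq_zero
      intro a _
      rw [if_neg]
      omega
  · rw [if_neg hF2]
    apply Finset.sum_eq_zero
    intro b _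
    apply Finset.sum_eq_zero
    intro a _
    rw [if_neg]
    omega

lemma B_count (r : ℕ) :
    Set.ncard {t : ℕ × ℕ × ℕ |
      t.1 % 2 = r % 2 ∧ t.2.2 % 2 = r % 2 ∧
      (t.1 + 2 * (t.2.1 + t.2.2)) % 4 = (r + 2) % 4 ∧
      t.1 + 2 * (t.2.1 + t.2.2) ≤ r + 2}
      = ∑ F ∈ range (r + 3), if F % 2 = r % 2 then G2 ((r + 2 - F) / 2) (r % 2) else 0 := by
  have hset : {t : ℕ × ℕ × ℕ |
      t.1 % 2 = r % 2 ∧ t.2.2 % 2 = r % 2 ∧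
      (t.1 + 2 * (t.2.1 + t.2.2)) % 4 = (r + 2) % 4 ∧
      t.1 + 2 * (t.2.1 + t.2.2) ≤ r + 2}
      = ↑(((range (r + 3)) ×ˢ (range (r + 3)) ×ˢ (range (r + 3))).filter
        (fun t => t.1 % 2 = r % 2 ∧ t.2.2 % 2 = r % 2 ∧
          (t.1 + 2 * (t.2.1 + t.2.2)) % 4 = (r + 2) % 4 ∧
          t.1 + 2 * (t.2.1 + t.2.2) ≤ r + 2)) := by
    ext ⟨F, a, b⟩
    simp only [Set.mem_setOf_eq, Finset.coe_filter, Finset.mem_product, Finset.mem_range]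
    omega
  rw [hset, Set.ncard_coe_finset, Finset.card_filter, Finset.sum_product]
  apply Finset.sum_congr rfl
  intro F hF
  have hFr : F ≤ r + 2 := by have := Finset.mem_range.mp hF; omega
  rw [Finset.sum_product, Finset.sum_comm]
  dsimp only
  by_cases hF2 : F % 2 = r % 2
  · rw [if_pos hF2]
    rw [← sum_half_parity (r + 3) ((r + 2 - F) / 2) (r % 2) (by omega) (by omega)]
    apply Finset.sum_congr rfl
    intro b hb
    by_cases hb2 : b ≤ (r + 2 - F) / 2 ∧ b % 2 = r % 2
    · rw [if_pos hb2]
      have key : ∀ a : ℕ, (F % 2 = r % 2 ∧ b % 2 = r % 2 ∧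
          (F + 2 * (a + b)) % 4 = (r + 2) % 4 ∧ F + 2 * (a + b) ≤ r + 2)
          ↔ (a ≤ (r + 2 - F) / 2 - b ∧ a % 2 = ((r + 2 - F) / 2 - b) % 2) := by
        intro a; omega
      have : (∑ a ∈ range (r + 3),
          if F % 2 = r % 2 ∧ b % 2 = r % 2 ∧
            (F + 2 * (a + b)) % 4 = (r + 2) % 4 ∧ F + 2 * (a + b) ≤ r + 2 then 1 else 0)
          = ∑ a ∈ range (r + 3),
            if a ≤ (r + 2 - F) / 2 - b ∧ a % 2 = ((r + 2 - F) / 2 - b) % 2 then 1 else 0 :=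
        Finset.sum_congr rfl (fun a _ => if_congr (key a) rfl rfl)
      rw [this, sum_ite_le_parity (r + 3) _ _ (by omega) (by omega)]
      omega
    · rw [if_neg hb2]
      apply Finset.sum_eq_zero
      intro a _
      rw [if_neg]
      omega
  · rw [if_neg hF2]
    apply Finset.sum_eq_zero
    intro b _
    apply Finset.sum_eq_zero
    intro a _
    rw [if_neg]
    omega


lemma SA_eq : ∀ r : ℕ,
    (∑ F ∈ range (r + 1), if F % 2 = r % 2 then G ((r - F) / 2) (r % 2) else 0)
      = RA (r / 2) (r % 2) := by
  intro r
  induction r using Nat.twoStepInduction with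
  | zero => decide
  | one => decide
  | more n ih _ =>
    have peel : (∑ F ∈ range (n + 2 + 1),
          if F % 2 = (n + 2) % 2 then G ((n + 2 - F) / 2) ((n + 2) % 2) else 0)
        = (∑ F ∈ range (n + 1),
            if (F + 1 + 1) % 2 = (n + 2) % 2 then G ((n + 2 - (F + 1 + 1)) / 2) ((n + 2) % 2) else 0)
          + (if (0 + 1) % 2 = (n + 2) % 2 then G ((n + 2 - (0 + 1)) / 2) ((n + 2) % 2) else 0)
          + (if 0 % 2 = (n + 2) % 2 then G ((n + 2 - 0) / 2) ((n + 2) % 2) else 0) := by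
      rw [Finset.sum_range_succ', Finset.sum_range_succ']
    rw [peel]
    have congr1 : (∑ F ∈ range (n + 1),
          if (F + 1 + 1) % 2 = (n + 2) % 2 then G ((n + 2 - (F + 1 + 1)) / 2) ((n + 2) % 2) else 0)
        = ∑ F ∈ range (n + 1), if F % 2 = n % 2 then G ((n - F) / 2) (n % 2) else 0 := by
      apply Finset.sum_congr rfl
      intro F _
      apply if_congr (by omega)
      · congr 1 <;> omega
      · rfl
    rw [congr1, ih]
    rcases Nat.even_or_odd n with ⟨k, hk⟩ | ⟨k, hk⟩
    · subst hk
      have e1 : (k + k) % 2 = 0 := by omega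
      have e2 : (k + k + 2) % 2 = 0 := by omega
      have e3 : (k + k + 2) / 2 = k + 1 := by omega
      have e4 : (k + k) / 2 = k := by omega
      rw [e1, e2, e3, e4, if_neg (by omega), if_pos (by omega), RA_succ]
      have e5 : (k + k + 2 - 0) / 2 = k + 1 := by omega
      rw [e5]
      ring
    · subst hk
      have e1 : (2 * k + 1) % 2 = 1 := by omega
      have e2 : (2 * k + 1 + 2) % 2 = 1 := by omega
      have e3 : (2 * k + 1 + 2) / 2 = k + 1 := by omega
      have e4 : (2 * k + 1) / 2 = k := by omega
      rw [e1, e2, e3, e4, if_pos (by omega), if_neg (by omega), RA_succ]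
      have e5 : (2 * k + 1 + 2 - (0 + 1)) / 2 = k + 1 := by omega
      rw [e5]
      ring

lemma SB_eq : ∀ r : ℕ,
    (∑ F ∈ range (r + 3), if F % 2 = r % 2 then G2 ((r + 2 - F) / 2) (r % 2) else 0)
      = RB (r / 2 + 1) (r % 2) := by
  intro r
  induction r using Nat.twoStepInduction with
  | zero => decide
  | one => decide
  | more n ih _ =>
    have peel : (∑ F ∈ range (n + 2 + 3),
          if F % 2 = (n + 2) % 2 then G2 ((n + 2 + 2 - F) / 2) ((n + 2) % 2) else 0)
        = (∑ F ∈ range (n + 3),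
            if (F + 1 + 1) % 2 = (n + 2) % 2 then G2 ((n + 2 + 2 - (F + 1 + 1)) / 2) ((n + 2) % 2) else 0)
          + (if (0 + 1) % 2 = (n + 2) % 2 then G2 ((n + 2 + 2 - (0 + 1)) / 2) ((n + 2) % 2) else 0)
          + (if 0 % 2 = (n + 2) % 2 then G2 ((n + 2 + 2 - 0) / 2) ((n + 2) % 2) else 0) := by
      rw [Finset.sum_range_succ', Finset.sum_range_succ']
    rw [peel]
    have congr1 : (∑ F ∈ range (n + 3),
          if (F + 1 + 1) % 2 = (n + 2) % 2 then G2 ((n + 2 + 2 - (F + 1 + 1)) / 2) ((n + 2) % 2) else 0)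
        = ∑ F ∈ range (n + 3), if F % 2 = n % 2 then G2 ((n + 2 - F) / 2) (n % 2) else 0 := by
      apply Finset.sum_congr rfl
      intro F _
      apply if_congr (by omega)
      · congr 1 <;> omega
      · rfl
    rw [congr1, ih]
    rcases Nat.even_or_odd n with ⟨k, hk⟩ | ⟨k, hk⟩
    · subst hk
      have e1 : (k + k) % 2 = 0 := by omega
      have e2 : (k + k + 2) % 2 = 0 := by omega
      have e3 : (k + k + 2) / 2 = k + 1 := by omega
      have e4 : (k + k) / 2 = k := by omega
      rw [e1, e2, e3, e4, if_neg (by omega), if_pos (by omega), RB_succ (k + 1) 0,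
        show k + 1 + 1 = k + 2 from by omega]
      have e5 : (k + k + 2 + 2 - 0) / 2 = k + 2 := by omega
      rw [e5]
      ring
    · subst hk
      have e1 : (2 * k + 1) % 2 = 1 := by omega
      have e2 : (2 * k + 1 + 2) % 2 = 1 := by omega
      have e3 : (2 * k + 1 + 2) / 2 = k + 1 := by omega
      have e4 : (2 * k + 1) / 2 = k := by omega
      rw [e1, e2, e3, e4, if_pos (by omega), if_neg (by omega), RB_succ (k + 1) 1,
        show k + 1 + 1 = k + 2 from by omega]
      have e5 : (2 * k + 1 + 2 + 2 - (0 + 1)) / 2 = k + 2 := by omega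
      rw [e5]
      ring


lemma case0 (q : ℕ) : 64 * (RA (2 * q) 0 + RB (2 * q + 1) 0)
    = (4 * q + 4) * (4 * q + 6) * (4 * q + 8) := by
  induction q with
  | zero => decide
  | succ q ih =>
    rw [show 2 * (q + 1) = 2 * q + 1 + 1 from by ring, RA_succ, RA_succ,
      show 2 * q + 1 + 1 + 1 = 2 * q + 1 + 1 + 1 from rfl, RB_succ (2 * q + 1 + 1) 0,
      RB_succ (2 * q + 1) 0]
    have hg1 : G (2 * q + 1) 0 = (q + 1) * (q + 2) := by
      unfold G
      rw [show (2 * q + 1 + 2 - 0) / 2 = q + 1 from by omega,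
        show (2 * q + 1 + 3 - 0) / 2 = q + 2 from by omega]
    have hg2 : G (2 * q + 1 + 1) 0 = (q + 2) * (q + 2) := by
      unfold G
      rw [show (2 * q + 1 + 1 + 2 - 0) / 2 = q + 2 from by omega,
        show (2 * q + 1 + 1 + 3 - 0) / 2 = q + 2 from by omega]
    have hh1 : G2 (2 * q + 1 + 1) 0 = tri (q + 2) := by
      unfold G2
      rw [show (2 * q + 1 + 1 + 2 - 0) / 2 = q + 2 from by omega]
    have hh2 : G2 (2 * q + 1 + 1 + 1) 0 = tri (q + 2) := by
      unfold G2
      rw [show (2 * q + 1 + 1 + 1 + 2 - 0) / 2 = q + 2 from by omega]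
    rw [hg1, hg2, hh1, hh2]
    have ht := tri_two (q + 2)
    zify at ih ht ⊢
    linear_combination ih + 64 * ht

lemma case1 (q : ℕ) : 64 * (RA (2 * q) 1 + RB (2 * q + 1) 1)
    = (4 * q + 1 + 3) ^ 3 := by
  induction q with
  | zero => decide
  | succ q ih =>
    rw [show 2 * (q + 1) = 2 * q + 1 + 1 from by ring, RA_succ, RA_succ,
      RB_succ (2 * q + 1 + 1) 1, RB_succ (2 * q + 1) 1]
    have hg1 : G (2 * q + 1) 1 = (q + 1) * (q + 1) := by
      unfold G
      rw [show (2 * q + 1 + 2 - 1) / 2 = q + 1 from by omega,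
        show (2 * q + 1 + 3 - 1) / 2 = q + 1 from by omega]
    have hg2 : G (2 * q + 1 + 1) 1 = (q + 1) * (q + 2) := by
      unfold G
      rw [show (2 * q + 1 + 1 + 2 - 1) / 2 = q + 1 from by omega,
        show (2 * q + 1 + 1 + 3 - 1) / 2 = q + 2 from by omega]
    have hh1 : G2 (2 * q + 1 + 1) 1 = tri (q + 1) := by
      unfold G2
      rw [show (2 * q + 1 + 1 + 2 - 1) / 2 = q + 1 from by omega]
    have hh2 : G2 (2 * q + 1 + 1 + 1) 1 = tri (q + 2) := by
      unfold G2
      rw [show (2 * q + 1 + 1 + 1 + 2 - 1) / 2 = q + 2 from by omega]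
    rw [hg1, hg2, hh1, hh2]
    have ht1 := tri_two (q + 1)
    have ht2 := tri_two (q + 2)
    zify at ih ht1 ht2 ⊢
    linear_combination ih + 32 * ht1 + 32 * ht2

lemma case2 (q : ℕ) : 64 * (RA (2 * q + 1) 0 + RB (2 * q + 1 + 1) 0)
    = (4 * q + 2 + 6) ^ 3 := by
  induction q with
  | zero => decide
  | succ q ih =>
    rw [show 2 * (q + 1) + 1 = 2 * q + 1 + 1 + 1 from by ring, RA_succ, RA_succ,
      RB_succ (2 * q + 1 + 1 + 1) 0, RB_succ (2 * q + 1 + 1) 0]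
    have hg1 : G (2 * q + 1 + 1) 0 = (q + 2) * (q + 2) := by
      unfold G
      rw [show (2 * q + 1 + 1 + 2 - 0) / 2 = q + 2 from by omega,
        show (2 * q + 1 + 1 + 3 - 0) / 2 = q + 2 from by omega]
    have hg2 : G (2 * q + 1 + 1 + 1) 0 = (q + 2) * (q + 3) := by
      unfold G
      rw [show (2 * q + 1 + 1 + 1 + 2 - 0) / 2 = q + 2 from by omega,
        show (2 * q + 1 + 1 + 1 + 3 - 0) / 2 = q + 3 from by omega]
    have hh1 : G2 (2 * q + 1 + 1 + 1) 0 = tri (q + 2) := by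
      unfold G2
      rw [show (2 * q + 1 + 1 + 1 + 2 - 0) / 2 = q + 2 from by omega]
    have hh2 : G2 (2 * q + 1 + 1 + 1 + 1) 0 = tri (q + 3) := by
      unfold G2
      rw [show (2 * q + 1 + 1 + 1 + 1 + 2 - 0) / 2 = q + 3 from by omega]
    rw [hg1, hg2, hh1, hh2]
    have ht1 := tri_two (q + 2)
    have ht2 := tri_two (q + 3)
    zify at ih ht1 ht2 ⊢
    linear_combination ih + 32 * ht1 + 32 * ht2

lemma case3 (q : ℕ) : 64 * (RA (2 * q + 1) 1 + RB (2 * q + 1 + 1) 1)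
    = (4 * q + 3 + 1) * (4 * q + 3 + 3) * (4 * q + 3 + 5) := by
  induction q with
  | zero => decide
  | succ q ih =>
    rw [show 2 * (q + 1) + 1 = 2 * q + 1 + 1 + 1 from by ring, RA_succ, RA_succ,
      RB_succ (2 * q + 1 + 1 + 1) 1, RB_succ (2 * q + 1 + 1) 1]
    have hg1 : G (2 * q + 1 + 1) 1 = (q + 1) * (q + 2) := by
      unfold G
      rw [show (2 * q + 1 + 1 + 2 - 1) / 2 = q + 1 from by omega,
        show (2 * q + 1 + 1 + 3 - 1) / 2 = q + 2 from by omega]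
    have hg2 : G (2 * q + 1 + 1 + 1) 1 = (q + 2) * (q + 2) := by
      unfold G
      rw [show (2 * q + 1 + 1 + 1 + 2 - 1) / 2 = q + 2 from by omega,
        show (2 * q + 1 + 1 + 1 + 3 - 1) / 2 = q + 2 from by omega]
    have hh1 : G2 (2 * q + 1 + 1 + 1) 1 = tri (q + 2) := by
      unfold G2
      rw [show (2 * q + 1 + 1 + 1 + 2 - 1) / 2 = q + 2 from by omega]
    have hh2 : G2 (2 * q + 1 + 1 + 1 + 1) 1 = tri (q + 2) := by
      unfold G2
      rw [show (2 * q + 1 + 1 + 1 + 1 + 2 - 1) / 2 = q + 2 from by omega]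
    rw [hg1, hg2, hh1, hh2]
    have ht := tri_two (q + 2)
    zify at ih ht ⊢
    linear_combination ih + 64 * ht


end CountABProof

/-- Closed formulas for `A(r) + B(r)`, where `A(r)` and `B(r)` count the respective sets of
lattice triples `(F, C₊, C₋)`. -/
theorem count_A_plus_B_formula (r : ℕ) (A B : ℕ)
    (hA : A = Set.ncard {t : ℕ × ℕ × ℕ |
      t.1 + 2 * (t.2.1 + t.2.2) ≤ r ∧ t.1 % 2 = r % 2 ∧ t.2.2 % 2 = r % 2})
    (hB : B = Set.ncard {t : ℕ × ℕ × ℕ |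
      t.1 % 2 = r % 2 ∧ t.2.2 % 2 = r % 2 ∧
      (t.1 + 2 * (t.2.1 + t.2.2)) % 4 = (r + 2) % 4 ∧
      t.1 + 2 * (t.2.1 + t.2.2) ≤ r + 2}) :
    (r % 4 = 0 → 64 * (A + B) = (r + 4) * (r + 6) * (r + 8)) ∧
    (r % 4 = 1 → 64 * (A + B) = (r + 3) ^ 3) ∧
    (r % 4 = 2 → 64 * (A + B) = (r + 6) ^ 3) ∧
    (r % 4 = 3 → 64 * (A + B) = (r + 1) * (r + 3) * (r + 5)) := by
  have hA' : A = CountABProof.RA (r / 2) (r % 2) := by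
    rw [hA, CountABProof.A_count r, CountABProof.SA_eq r]
  have hB' : B = CountABProof.RB (r / 2 + 1) (r % 2) := by
    rw [hB, CountABProof.B_count r, CountABProof.SB_eq r]
  refine ⟨fun h => ?_, fun h => ?_, fun h => ?_, fun h => ?_⟩
  · obtain ⟨q, rfl⟩ : ∃ q, r = 4 * q := ⟨r / 4, by omega⟩
    rw [hA', hB', show (4 * q) / 2 = 2 * q from by omega,
      show (4 * q) % 2 = 0 from by omega]
    exact CountABProof.case0 q
  · obtain ⟨q, rfl⟩ : ∃ q, r = 4 * q + 1 := ⟨r / 4, by omega⟩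
    rw [hA', hB', show (4 * q + 1) / 2 = 2 * q from by omega,
      show (4 * q + 1) % 2 = 1 from by omega]
    exact CountABProof.case1 q
  · obtain ⟨q, rfl⟩ : ∃ q, r = 4 * q + 2 := ⟨r / 4, by omega⟩
    rw [hA', hB', show (4 * q + 2) / 2 = 2 * q + 1 from by omega,
      show (4 * q + 2) % 2 = 0 from by omega]
    exact CountABProof.case2 q
  · obtain ⟨q, rfl⟩ : ∃ q, r = 4 * q + 3 := ⟨r / 4, by omega⟩
    rw [hA', hB', show (4 * q + 3) / 2 = 2 * q + 1 from by omega,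
      show (4 * q + 3) % 2 = 1 from by omega]
    exact CountABProof.case3 q
end
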